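/- arXiv:1809.04675 — 8 statements merged into one kernel-verified Lean document; each statement's English description precedes it below -/
import Mathlib

section
/- Let G be an (m,n)-mixed graph with at least two vertices whose underlying graph U(G) is connected. Then χ_s(G) = 2 if and only if there exists a minimal edge cut E′ of U(G) such that either (a) there is a colour i ∈ {1,…,n} with every element of E′ an edge of G of colour i, or (b) there is a colour j ∈ {1,…,m} with every element of E′ an arc of G of colour j, and the components of U(G) − E′ can be partitioned into two sets X and Y so that every arc of G between a vertex of X and a vertex of Y has its head in Y. -/
open SimpleGraph

open SimpleGraph

private lemma walkSubset {V : Type} {Γ : SimpleGraph V} {S : Set V}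
    (hS : ∀ u ∈ S, ∀ w, Γ.Adj u w → w ∈ S) :
    ∀ {x y : V}, Γ.Walk x y → x ∈ S → y ∈ S := by
  intro x y p
  induction p with
  | nil => exact id
  | cons h' _ ih => exact fun hx => ih (hS _ hx _ h')

private lemma existsCross {V : Type} {Γ : SimpleGraph V} {S : Set V} :
    ∀ {x y : V}, Γ.Walk x y → x ∈ S → y ∉ S →
      ∃ u ∈ S, ∃ w, w ∉ S ∧ Γ.Adj u w := by
  intro x y p
  induction p with
  | nil => exact fun hx hy => absurd hx hy
  | @cons u c w h' _ ih =>
    intro hx hy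
    by_cases hc : c ∈ S
    · exact ih hc hy
    · exact ⟨u, hx, c, hc, h'⟩

private lemma existsMinimalSubset {α : Type} [Finite α] (P : Set α → Prop) :
    ∀ (k : ℕ) (F : Set α), F.ncard ≤ k → P F →
      ∃ G ⊆ F, P G ∧ ∀ G' ⊂ G, ¬ P G' := by
  intro k
  induction k with
  | zero =>
    intro F hk hF
    refine ⟨F, le_refl _, hF, fun G' hG' _ => ?_⟩
    have hF0 : F = ∅ := Set.ncard_eq_zero (Set.toFinite F) |>.mp (Nat.le_zero.mp hk)
    rw [hF0] at hG'
    exact hG'.2 (Set.empty_subset _)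
  | succ k ih =>
    intro F hk hF
    by_cases h : ∃ G' ⊂ F, P G'
    · obtain ⟨G', hG', hPG'⟩ := h
      have hlt : G'.ncard < F.ncard := Set.ncard_lt_ncard hG' (Set.toFinite F)
      obtain ⟨Gm, h1, h2, h3⟩ := ih G' (by omega) hPG'
      exact ⟨Gm, h1.trans hG'.subset, h2, h3⟩
    · exact ⟨F, le_refl _, hF, fun G' hG' hPG' => h ⟨G', hG', hPG'⟩⟩

private lemma fin2cases : ∀ a b c d : Fin 2, a ≠ b → c ≠ d →
    (c = a ∧ d = b) ∨ (c = b ∧ d = a) := by decide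


/-- An `(m,n)`-mixed graph on vertex type `V`: arcs (ordered pairs of distinct
vertices) coloured by `Fin m` and edges (unordered pairs of distinct vertices)
coloured by `Fin n`, with at most one adjacency between any two vertices.
`arcColor u v = some j` means there is an arc from `u` to `v` of colour `j`;
`edgeColor u v = some i` means there is an edge between `u` and `v` of colour `i`. -/
structure MixedGraph (m n : ℕ) (V : Type) where
  arcColor : V → V → Option (Fin m)
  edgeColor : V → V → Option (Fin n)
  edge_symm : ∀ u v, edgeColor u v = edgeColor v u
  edge_irrefl : ∀ v, edgeColor v v = none
  arc_asymm : ∀ u v, (arcColor u v).isSome → arcColor v u = none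
  arc_not_edge : ∀ u v, (arcColor u v).isSome → edgeColor u v = none

namespace MixedGraph

variable {m n : ℕ} {V W : Type}

/-- Adjacency in the underlying graph `U(G)`. -/
def Adj (G : MixedGraph m n V) (u v : V) : Prop :=
  (G.arcColor u v).isSome ∨ (G.arcColor v u).isSome ∨ (G.edgeColor u v).isSome

/-- The underlying simple graph `U(G)`. -/
def underlying (G : MixedGraph m n V) : SimpleGraph V where
  Adj := G.Adj
  symm := by
    constructor
    intro u v h
    rcases h with h | h | h
    · exact Or.inr (Or.inl h)
    · exact Or.inl h
    · refine Or.inr (Or.inr ?_)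
      rw [G.edge_symm]
      exact h
  loopless := by
    constructor
    intro v h
    rcases h with h | h | h
    · simp [G.arc_asymm v v h] at h
    · simp [G.arc_asymm v v h] at h
    · simp [G.edge_irrefl v] at h

/-- `G` is complete when its underlying graph is a complete graph. -/
def IsComplete (G : MixedGraph m n V) : Prop :=
  ∀ u v : V, u ≠ v → G.Adj u v

/-- A simple homomorphism of `(m,n)`-mixed graphs: either `G` has one vertex or
`φ` is non-constant, and every arc/edge is mapped to an arc/edge of the same
colour unless its endpoints are identified. -/
def IsSimpleHom [Fintype V] (G : MixedGraph m n V) (H : MixedGraph m n W) (φ : V → W) : Prop :=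
  (Fintype.card V = 1 ∨ ∃ x y : V, φ x ≠ φ y) ∧
  (∀ u v : V, ∀ j : Fin m, G.arcColor u v = some j →
      φ u = φ v ∨ H.arcColor (φ u) (φ v) = some j) ∧
  (∀ u v : V, ∀ i : Fin n, G.edgeColor u v = some i →
      φ u = φ v ∨ H.edgeColor (φ u) (φ v) = some i)

/-- The simple chromatic number `χₛ(G)`: the least `t` such that `G` admits a
simple homomorphism to some `(m,n)`-mixed graph on `t` vertices. -/
noncomputable def simpleChrom [Fintype V] (G : MixedGraph m n V) : ℕ :=
  sInf {t : ℕ | ∃ H : MixedGraph m n (Fin t), ∃ φ : V → Fin t, G.IsSimpleHom H φ}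

/-- An (ordinary) homomorphism of `(m,n)`-mixed graphs. -/
def IsHom (G : MixedGraph m n V) (H : MixedGraph m n W) (φ : V → W) : Prop :=
  (∀ u v : V, G.Adj u v → φ u ≠ φ v) ∧
  (∀ u v : V, ∀ j : Fin m, G.arcColor u v = some j → H.arcColor (φ u) (φ v) = some j) ∧
  (∀ u v : V, ∀ i : Fin n, G.edgeColor u v = some i → H.edgeColor (φ u) (φ v) = some i)

/-- The chromatic number `χ(G)`: the least `t` such that `G` admits a
homomorphism to some `(m,n)`-mixed graph on `t` vertices. -/
noncomputable def chrom (G : MixedGraph m n V) : ℕ :=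
  sInf {t : ℕ | ∃ H : MixedGraph m n (Fin t), ∃ φ : V → Fin t, G.IsHom H φ}

/-- `v` is between `u` and `w`: both `u` and `w` are adjacent to `v`, and `u`
and `w` do not agree on `v` (the two adjacencies do not have the same type). -/
def Between (G : MixedGraph m n V) (v u w : V) : Prop :=
  G.Adj u v ∧ G.Adj w v ∧
  ¬ ((∃ i : Fin n, G.edgeColor u v = some i ∧ G.edgeColor w v = some i) ∨
     (∃ j : Fin m, G.arcColor u v = some j ∧ G.arcColor w v = some j) ∨
     (∃ j : Fin m, G.arcColor v u = some j ∧ G.arcColor v w = some j))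

/-- A set of vertices is convex if no vertex outside it is between two of its
vertices. -/
def IsConvex (G : MixedGraph m n V) (C : Set V) : Prop :=
  ∀ u ∈ C, ∀ w ∈ C, ∀ v : V, G.Between v u w → v ∈ C

/-- `conv(N)`: the smallest convex set containing `N`. -/
def conv (G : MixedGraph m n V) (N : Set V) : Set V :=
  ⋂₀ {C : Set V | G.IsConvex C ∧ N ⊆ C}

end MixedGraph

/-- A minimal edge cut of a connected simple graph: a set of edges whose removal
disconnects the graph, minimal with this property. -/
def IsMinimalEdgeCut {V : Type} (Γ : SimpleGraph V) (E' : Set (Sym2 V)) : Prop :=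
  E' ⊆ Γ.edgeSet ∧ ¬ (Γ.deleteEdges E').Connected ∧
    ∀ F : Set (Sym2 V), F ⊂ E' → (Γ.deleteEdges F).Connected

/-- Let `G` be an `(m,n)`-mixed graph with at least two
vertices whose underlying graph is connected. Then `χₛ(G) = 2` iff there is a
minimal edge cut `E'` of `U(G)` such that either (a) every element of `E'` is an
edge of `G` of one fixed colour `i`, or (b) every element of `E'` is an arc of
`G` of one fixed colour `j` and the components of `U(G) − E'` can be partitioned
into two sets `X` and `Y = Xᶜ` so that every arc of `G` between `X` and `Y` has
its head in `Y`. -/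
theorem stmt1 {m n : ℕ} {V : Type} [Fintype V] (G : MixedGraph m n V)
    (hV : 2 ≤ Fintype.card V) (hconn : G.underlying.Connected) :
    G.simpleChrom = 2 ↔
      ∃ E' : Set (Sym2 V), IsMinimalEdgeCut G.underlying E' ∧
        ((∃ i : Fin n, ∀ u v : V, s(u, v) ∈ E' → G.edgeColor u v = some i) ∨
         (∃ j : Fin m,
            (∀ u v : V, s(u, v) ∈ E' →
                G.arcColor u v = some j ∨ G.arcColor v u = some j) ∧
            ∃ X : Set V, X.Nonempty ∧ Xᶜ.Nonempty ∧
              (∀ x ∈ X, ∀ y ∈ Xᶜ, ¬ (G.underlying.deleteEdges E').Adj x y) ∧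
              (∀ x ∈ X, ∀ y ∈ Xᶜ, G.arcColor y x = none))) := by
  
  classical
  have hneV : Nonempty V := Fintype.card_pos_iff.mp (by omega)
  have hchrom : G.simpleChrom =
      sInf {t : ℕ | ∃ H : MixedGraph m n (Fin t), ∃ φ : V → Fin t, G.IsSimpleHom H φ} := rfl
  constructor
  · -- forward direction
    intro h
    have hSne : {t : ℕ | ∃ H : MixedGraph m n (Fin t), ∃ φ : V → Fin t,
        G.IsSimpleHom H φ}.Nonempty := by
      by_contra hc
      rw [Set.not_nonempty_iff_eq_empty] at hc
      rw [hchrom, hc, Nat.sInf_empty] at h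
      exact absurd h (by norm_num)
    have h2 := Nat.sInf_mem hSne
    rw [← hchrom, h] at h2
    obtain ⟨H, φ, hhom⟩ := h2
    obtain ⟨hnc, harc, hedge⟩ := hhom
    obtain ⟨x0, y0, hxy⟩ : ∃ x y : V, φ x ≠ φ y := by
      rcases hnc with h1 | h1
      · exact absurd h1 (by omega)
      · exact h1
    obtain ⟨p⟩ := hconn.preconnected x0 y0
    obtain ⟨u0, hu0, w0, hw0, hadj0⟩ :=
      existsCross (S := {v | φ v = φ x0}) p rfl (fun hh => hxy hh.symm)
    have hne0 : φ u0 ≠ φ w0 := by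
      intro hh
      exact hw0 (show φ w0 = φ x0 by rw [← hh]; exact hu0)
    have hGadj0 : G.Adj u0 w0 := hadj0
    set E0 : Set (Sym2 V) := {e | ∃ u v, e = s(u,v) ∧ G.Adj u v ∧ φ u ≠ φ v} with hE0def
    have memE0 : ∀ u v : V, s(u,v) ∈ E0 ↔ (G.Adj u v ∧ φ u ≠ φ v) := by
      intro u v
      rw [hE0def]
      constructor
      · rintro ⟨pa, qa, hpq, hadj, hne⟩
        rcases Sym2.eq_iff.mp hpq with ⟨h1, h2⟩ | ⟨h1, h2⟩
        · rw [h1, h2]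
          exact ⟨hadj, hne⟩
        · rw [h1, h2]
          exact ⟨(show G.underlying.Adj pa qa from hadj).symm, hne.symm⟩
      · intro hh
        exact ⟨u, v, rfl, hh.1, hh.2⟩
    have hE0sub : E0 ⊆ G.underlying.edgeSet := by
      rw [hE0def]
      rintro e ⟨u, v, rfl, hadj, -⟩
      exact G.underlying.mem_edgeSet.mpr hadj
    have hfiberclosed : ∀ (c : Fin 2) (u : V), φ u = c → ∀ w,
        (G.underlying.deleteEdges E0).Adj u w → φ w = c := by
      intro c u hu w hadj
      rw [SimpleGraph.deleteEdges_adj] at hadj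
      by_contra hw
      exact hadj.2 ((memE0 u w).mpr ⟨hadj.1, fun hh => hw (hh ▸ hu)⟩)
    have hE0disc : ¬ (G.underlying.deleteEdges E0).Connected := by
      intro hc
      obtain ⟨q⟩ := hc.preconnected u0 w0
      exact hne0 ((walkSubset (S := {v | φ v = φ u0})
        (fun a ha w haw => hfiberclosed (φ u0) a ha w haw) q rfl)).symm
    have hHtype : (∃ a b : Fin 2, a ≠ b ∧ ∃ i : Fin n, H.edgeColor a b = some i) ∨
        (∃ a b : Fin 2, a ≠ b ∧ ∃ j : Fin m, H.arcColor a b = some j) := by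
      rcases hGadj0 with h1 | h1 | h1
      · obtain ⟨j', hj'⟩ := Option.isSome_iff_exists.mp h1
        rcases harc u0 w0 j' hj' with he | hH'
        · exact absurd he hne0
        · exact Or.inr ⟨φ u0, φ w0, hne0, j', hH'⟩
      · obtain ⟨j', hj'⟩ := Option.isSome_iff_exists.mp h1
        rcases harc w0 u0 j' hj' with he | hH'
        · exact absurd he.symm hne0
        · exact Or.inr ⟨φ w0, φ u0, Ne.symm hne0, j', hH'⟩
      · obtain ⟨i', hi'⟩ := Option.isSome_iff_exists.mp h1
        rcases hedge u0 w0 i' hi' with he | hH'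
        · exact absurd he hne0
        · exact Or.inl ⟨φ u0, φ w0, hne0, i', hH'⟩
    rcases hHtype with ⟨a, b, hab, i, hEi⟩ | ⟨a, b, hab, j, hAj⟩
    · -- case (a): H has an edge of colour i
      have hHe : ∀ c d : Fin 2, c ≠ d → H.edgeColor c d = some i := by
        intro c d hcd
        rcases fin2cases a b c d hab hcd with ⟨rfl, rfl⟩ | ⟨rfl, rfl⟩
        · exact hEi
        · rw [H.edge_symm]; exact hEi
      have hcr : ∀ u v : V, G.Adj u v → φ u ≠ φ v → G.edgeColor u v = some i := by
        intro u v hadj hne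
        rcases hadj with h1 | h1 | h1
        · obtain ⟨j', hj'⟩ := Option.isSome_iff_exists.mp h1
          rcases harc u v j' hj' with he | hH'
          · exact absurd he hne
          · have hz := H.arc_not_edge _ _ (by rw [hH']; rfl)
            rw [hHe (φ u) (φ v) hne] at hz
            exact absurd hz (by simp)
        · obtain ⟨j', hj'⟩ := Option.isSome_iff_exists.mp h1
          rcases harc v u j' hj' with he | hH'
          · exact absurd he.symm hne
          · have hz := H.arc_not_edge _ _ (by rw [hH']; rfl)
            rw [hHe (φ v) (φ u) (Ne.symm hne)] at hz
            exact absurd hz (by simp)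
        · obtain ⟨i', hi'⟩ := Option.isSome_iff_exists.mp h1
          rcases hedge u v i' hi' with he | hH'
          · exact absurd he hne
          · rw [hHe (φ u) (φ v) hne] at hH'
            have hii : i = i' := Option.some.inj hH'
            rw [hi', ← hii]
      obtain ⟨F, hFsub, hFdisc, hFmin⟩ :=
        existsMinimalSubset (fun F => ¬ (G.underlying.deleteEdges F).Connected)
          E0.ncard E0 le_rfl hE0disc
      refine ⟨F, ⟨hFsub.trans hE0sub, hFdisc, fun F' hF' => not_not.mp (hFmin F' hF')⟩,
        Or.inl ⟨i, ?_⟩⟩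
      intro u v hmem
      obtain ⟨hadj, hne⟩ := (memE0 u v).mp (hFsub hmem)
      exact hcr u v hadj hne
    · -- case (b): H has an arc of colour j, from a to b
      have hAba : H.arcColor b a = none := H.arc_asymm a b (by rw [hAj]; rfl)
      have hEab : H.edgeColor a b = none := H.arc_not_edge a b (by rw [hAj]; rfl)
      have hEba : H.edgeColor b a = none := by rw [H.edge_symm b a]; exact hEab
      have hcr : ∀ u v : V, G.Adj u v → φ u ≠ φ v →
          (φ u = a ∧ φ v = b ∧ G.arcColor u v = some j) ∨
          (φ u = b ∧ φ v = a ∧ G.arcColor v u = some j) := by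
        intro u v hadj hne
        rcases hadj with h1 | h1 | h1
        · obtain ⟨j', hj'⟩ := Option.isSome_iff_exists.mp h1
          rcases harc u v j' hj' with he | hH'
          · exact absurd he hne
          · rcases fin2cases a b (φ u) (φ v) hab hne with ⟨hu, hv⟩ | ⟨hu, hv⟩
            · left
              refine ⟨hu, hv, ?_⟩
              rw [hu, hv, hAj] at hH'
              have hjj : j = j' := Option.some.inj hH'
              rw [hj', ← hjj]
            · rw [hu, hv, hAba] at hH'
              exact absurd hH' (by simp)
        · obtain ⟨j', hj'⟩ := Option.isSome_iff_exists.mp h1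
          rcases harc v u j' hj' with he | hH'
          · exact absurd he.symm hne
          · rcases fin2cases a b (φ v) (φ u) hab (Ne.symm hne) with ⟨hv, hu⟩ | ⟨hv, hu⟩
            · right
              refine ⟨hu, hv, ?_⟩
              rw [hv, hu, hAj] at hH'
              have hjj : j = j' := Option.some.inj hH'
              rw [hj', ← hjj]
            · rw [hv, hu, hAba] at hH'
              exact absurd hH' (by simp)
        · obtain ⟨i', hi'⟩ := Option.isSome_iff_exists.mp h1
          rcases hedge u v i' hi' with he | hH'
          · exact absurd he hne
          · rcases fin2cases a b (φ u) (φ v) hab hne with ⟨hu, hv⟩ | ⟨hu, hv⟩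
            · rw [hu, hv, hEab] at hH'
              exact absurd hH' (by simp)
            · rw [hu, hv, hEba] at hH'
              exact absurd hH' (by simp)
      obtain ⟨va, b0, hva, hb0⟩ : ∃ va b0 : V, φ va = a ∧ φ b0 = b := by
        rcases hcr u0 w0 hGadj0 hne0 with ⟨h1, h2, -⟩ | ⟨h1, h2, -⟩
        · exact ⟨u0, w0, h1, h2⟩
        · exact ⟨w0, u0, h2, h1⟩
      set C : Set V := {v | (G.underlying.deleteEdges E0).Reachable b0 v} with hCdef
      have hb0C : b0 ∈ C := by
        rw [hCdef]; exact SimpleGraph.Reachable.refl b0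
      have memC : ∀ v : V, v ∈ C ↔ (G.underlying.deleteEdges E0).Reachable b0 v := by
        intro v; rw [hCdef]; rfl
      have hCb : ∀ v ∈ C, φ v = b := by
        intro v hv
        obtain ⟨q⟩ := (memC v).mp hv
        exact walkSubset (S := {v | φ v = b})
          (fun x hx w hw => hfiberclosed b x hx w hw) q hb0
      have hCclosed : ∀ v ∈ C, ∀ w, (G.underlying.deleteEdges E0).Adj v w → w ∈ C := by
        intro v hv w hw
        exact (memC w).mpr (((memC v).mp hv).trans hw.reachable)
      set FC : Set (Sym2 V) := {e | ∃ u v, e = s(u,v) ∧ G.Adj u v ∧ u ∉ C ∧ v ∈ C} with hFCdef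
      have hFCsub : FC ⊆ E0 := by
        rw [hFCdef]
        rintro e ⟨u, v, rfl, hadj, hu, hv⟩
        refine (memE0 u v).mpr ⟨hadj, ?_⟩
        intro hfe
        refine hu (hCclosed v hv u ?_)
        rw [SimpleGraph.deleteEdges_adj]
        refine ⟨(show G.underlying.Adj u v from hadj).symm, ?_⟩
        intro hmem
        exact ((memE0 v u).mp hmem).2 hfe.symm
      have hvaC : va ∉ C := by
        intro hva'
        have hz := hCb va hva'
        rw [hva] at hz
        exact hab hz
      have hFCdisc : ¬ (G.underlying.deleteEdges FC).Connected := by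
        intro hc
        obtain ⟨q⟩ := hc.preconnected b0 va
        refine hvaC (walkSubset (S := C) ?_ q hb0C)
        intro x hx w hw
        rw [SimpleGraph.deleteEdges_adj] at hw
        by_contra hwC
        refine hw.2 ?_
        rw [hFCdef]
        exact ⟨w, x, Sym2.eq_swap, (show G.underlying.Adj x w from hw.1).symm, hwC, hx⟩
      obtain ⟨F, hFsub, hFdisc, hFmin⟩ :=
        existsMinimalSubset (fun F => ¬ (G.underlying.deleteEdges F).Connected)
          FC.ncard FC le_rfl hFCdisc
      have hFE0 : F ⊆ E0 := hFsub.trans hFCsub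
      set Y : Set V := {v | (G.underlying.deleteEdges F).Reachable b0 v} with hYdef
      have memY : ∀ v : V, v ∈ Y ↔ (G.underlying.deleteEdges F).Reachable b0 v := by
        intro v; rw [hYdef]; rfl
      have hCY : C ⊆ Y := by
        intro v hv
        exact (memY v).mpr (SimpleGraph.Reachable.mono
          (SimpleGraph.deleteEdges_anti hFE0) ((memC v).mp hv))
      have hb0Y : b0 ∈ Y := (memY b0).mpr (SimpleGraph.Reachable.refl b0)
      obtain ⟨x1, hx1⟩ : ∃ x, x ∉ Y := by
        by_contra hcon
        push_neg at hcon
        exact hFdisc ⟨fun u v =>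
          ((memY u).mp (hcon u)).symm.trans ((memY v).mp (hcon v))⟩
      refine ⟨F, ⟨hFE0.trans hE0sub, hFdisc, fun F' hF' => not_not.mp (hFmin F' hF')⟩,
        Or.inr ⟨j, ?_, Yᶜ, ⟨x1, hx1⟩, ?_, ?_, ?_⟩⟩
      · intro u v hmem
        obtain ⟨hadj, hne⟩ := (memE0 u v).mp (hFE0 hmem)
        rcases hcr u v hadj hne with ⟨-, -, h3⟩ | ⟨-, -, h3⟩
        · exact Or.inl h3
        · exact Or.inr h3
      · rw [compl_compl]
        exact ⟨b0, hb0Y⟩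
      · intro x hxX y hyY hadj
        rw [compl_compl] at hyY
        exact hxX ((memY x).mpr (((memY y).mp hyY).trans hadj.symm.reachable))
      · intro x hxX y hyY
        rw [compl_compl] at hyY
        by_contra hnone
        obtain ⟨j', hj'⟩ := Option.ne_none_iff_exists'.mp hnone
        have hadjyx : G.Adj y x := Or.inl (by rw [hj']; rfl)
        have hmem : s(y,x) ∈ F := by
          by_contra hF'
          refine hxX ((memY x).mpr (((memY y).mp hyY).trans
            (SimpleGraph.Adj.reachable ?_)))
          rw [SimpleGraph.deleteEdges_adj]
          exact ⟨hadjyx, hF'⟩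
        have hmemFC := hFsub hmem
        rw [hFCdef] at hmemFC
        obtain ⟨p', q', hpq, -, hpC, hqC⟩ := hmemFC
        obtain ⟨hadj', hne'⟩ := (memE0 y x).mp (hFE0 hmem)
        rcases Sym2.eq_iff.mp hpq with ⟨rfl, rfl⟩ | ⟨rfl, rfl⟩
        · exact hxX (hCY hqC)
        · have hyb : φ y = b := hCb y hqC
          rcases hcr y x hadj' hne' with ⟨h1, -, -⟩ | ⟨-, -, h3⟩
          · exact hab (h1.symm.trans hyb)
          · have hz := G.arc_asymm x y (by rw [h3]; rfl)
            rw [hj'] at hz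
            exact absurd hz (by simp)
  · -- backward direction
    rintro ⟨E', ⟨hEsub, hEdisc, -⟩, hcase⟩
    have h2mem : 2 ∈ {t : ℕ | ∃ H : MixedGraph m n (Fin t), ∃ φ : V → Fin t,
        G.IsSimpleHom H φ} := by
      rcases hcase with ⟨i, hi⟩ | ⟨j, hj, X, hXne, hXcne, hsep, harcn⟩
      · -- case (a)
        obtain ⟨p, q, hpq⟩ : ∃ p q : V, ¬ (G.underlying.deleteEdges E').Reachable p q := by
          by_contra hc
          push_neg at hc
          exact hEdisc ⟨fun u v => hc u v⟩
        set X0 : Set V := {v | (G.underlying.deleteEdges E').Reachable p v} with hX0def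
        have memX0 : ∀ v : V, v ∈ X0 ↔ (G.underlying.deleteEdges E').Reachable p v := by
          intro v; rw [hX0def]; rfl
        have hpX0 : p ∈ X0 := (memX0 p).mpr (SimpleGraph.Reachable.refl p)
        have hqX0 : q ∉ X0 := fun hq => hpq ((memX0 q).mp hq)
        set φ0 : V → Fin 2 := fun v => if v ∈ X0 then 0 else 1 with hφ0def
        have hmemlem : ∀ u v : V, G.Adj u v → φ0 u ≠ φ0 v → s(u,v) ∈ E' := by
          intro u v hadj hf
          by_contra hnm
          have hd : (G.underlying.deleteEdges E').Adj u v := by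
            rw [SimpleGraph.deleteEdges_adj]
            exact ⟨hadj, hnm⟩
          refine hf ?_
          simp only [hφ0def]
          by_cases hu : u ∈ X0
          · rw [if_pos hu, if_pos ((memX0 v).mpr (((memX0 u).mp hu).trans hd.reachable))]
          · rw [if_neg hu, if_neg (fun hv : v ∈ X0 =>
              hu ((memX0 u).mpr (((memX0 v).mp hv).trans hd.symm.reachable)))]
        refine ⟨⟨fun _ _ => none, fun x y => if x = y then none else some i,
          ?_, ?_, ?_, ?_⟩, φ0, ?_, ?_, ?_⟩
        · intro u v
          show (if u = v then (none : Option (Fin n)) else some i) =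
            (if v = u then (none : Option (Fin n)) else some i)
          rcases eq_or_ne u v with rfl | hne
          · rfl
          · rw [if_neg hne, if_neg (Ne.symm hne)]
        · intro v
          exact if_pos rfl
        · intro u v hs
          simp at hs
        · intro u v hs
          simp at hs
        · right
          refine ⟨p, q, ?_⟩
          simp only [hφ0def, if_pos hpX0, if_neg hqX0]
          decide
        · intro u v j' hj'
          by_cases hf : φ0 u = φ0 v
          · exact Or.inl hf
          · exfalso
            have hadj : G.Adj u v := Or.inl (by rw [hj']; rfl)
            have hz := G.arc_not_edge u v (by rw [hj']; rfl)
            rw [hi u v (hmemlem u v hadj hf)] at hz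
            exact absurd hz (by simp)
        · intro u v i' hi'
          by_cases hf : φ0 u = φ0 v
          · exact Or.inl hf
          · right
            have hadj : G.Adj u v := Or.inr (Or.inr (by rw [hi']; rfl))
            have heq : some i' = some i := by
              rw [← hi', hi u v (hmemlem u v hadj hf)]
            show (if φ0 u = φ0 v then none else some i) = some i'
            rw [if_neg hf, ← heq]
      · -- case (b)
        obtain ⟨xX, hxX⟩ := hXne
        obtain ⟨yX, hyX⟩ := hXcne
        set φ0 : V → Fin 2 := fun v => if v ∈ X then 0 else 1 with hφ0def
        have hmem2 : ∀ u v : V, G.Adj u v → u ∈ X → v ∉ X → s(u,v) ∈ E' := by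
          intro u v hadj hu hv
          by_contra hnm
          refine hsep u hu v hv ?_
          rw [SimpleGraph.deleteEdges_adj]
          exact ⟨hadj, hnm⟩
        have hdmlem : ∀ u v : V, φ0 u ≠ φ0 v → (u ∈ X ∧ v ∉ X) ∨ (v ∈ X ∧ u ∉ X) := by
          intro u v hf
          simp only [hφ0def] at hf
          by_cases hu : u ∈ X <;> by_cases hv : v ∈ X
          · exact absurd (by rw [if_pos hu, if_pos hv]) hf
          · exact Or.inl ⟨hu, hv⟩
          · exact Or.inr ⟨hv, hu⟩
          · exact absurd (by rw [if_neg hu, if_neg hv]) hf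
        refine ⟨⟨fun x y => if x = 0 ∧ y = 1 then some j else none, fun _ _ => none,
          fun _ _ => rfl, fun _ => rfl, ?_, fun _ _ _ => rfl⟩, φ0, ?_, ?_, ?_⟩
        · intro u v hs
          by_cases hc : u = 0 ∧ v = 1
          · show (if v = 0 ∧ u = 1 then some j else none) = none
            obtain ⟨rfl, rfl⟩ := hc
            rw [if_neg (by decide)]
          · simp only [if_neg hc] at hs
            simp at hs
        · right
          refine ⟨xX, yX, ?_⟩
          simp only [hφ0def, if_pos hxX, if_neg hyX]
          decide
        · intro u v j' hj'
          by_cases hf : φ0 u = φ0 v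
          · exact Or.inl hf
          · right
            have hadj : G.Adj u v := Or.inl (by rw [hj']; rfl)
            rcases hdmlem u v hf with ⟨hu, hv⟩ | ⟨hv, hu⟩
            · rcases hj u v (hmem2 u v hadj hu hv) with h3 | h3
              · have hjj : j' = j := by
                  rw [hj'] at h3
                  exact Option.some.inj h3
                show (if φ0 u = 0 ∧ φ0 v = 1 then some j else none) = some j'
                simp only [hφ0def]
                rw [if_pos hu, if_neg hv,
                  if_pos (show (0 : Fin 2) = 0 ∧ (1 : Fin 2) = 1 from ⟨rfl, rfl⟩), hjj]
              · have hz := G.arc_asymm u v (by rw [hj']; rfl)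
                rw [h3] at hz
                exact absurd hz (by simp)
            · exfalso
              have hz := harcn v hv u hu
              rw [hj'] at hz
              exact absurd hz (by simp)
        · intro u v i' hi'
          by_cases hf : φ0 u = φ0 v
          · exact Or.inl hf
          · exfalso
            have hadj : G.Adj u v := Or.inr (Or.inr (by rw [hi']; rfl))
            have hmem : s(u,v) ∈ E' := by
              rcases hdmlem u v hf with ⟨hu, hv⟩ | ⟨hv, hu⟩
              · exact hmem2 u v hadj hu hv
              · rw [Sym2.eq_swap]
                exact hmem2 v u (show G.underlying.Adj u v from hadj).symm hv hu
            rcases hj u v hmem with h3 | h3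
            · have hz := G.arc_not_edge u v (by rw [h3]; rfl)
              rw [hi'] at hz
              exact absurd hz (by simp)
            · have hz := G.arc_not_edge v u (by rw [h3]; rfl)
              rw [G.edge_symm v u, hi'] at hz
              exact absurd hz (by simp)
    rw [hchrom]
    refine le_antisymm (Nat.sInf_le h2mem) (le_csInf ⟨2, h2mem⟩ ?_)
    intro t ht
    match t with
    | 0 =>
      obtain ⟨H', φ', -⟩ := ht
      exact (φ' (Classical.arbitrary V)).elim0
    | 1 =>
      obtain ⟨H', φ', hhom'⟩ := ht
      rcases hhom'.1 with h1 | ⟨x, y, hxy⟩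
      · exact absurd h1 (by omega)
      · exact absurd (Subsingleton.elim (φ' x) (φ' y)) hxy
    | (t + 2) => omega
end

section
/- An (m,n)-mixed graph G is an (m,n)-mixed simple clique, i.e. χ_s(G) = |V(G)|, if and only if conv({u,v}) = V(G) for every pair of distinct vertices u, v ∈ V(G). -/
namespace MixedGraph

variable {m n : ℕ} {V W X : Type}

lemma adj_symm (G : MixedGraph m n V) {a b : V} (h : G.Adj a b) : G.Adj b a := by
  rcases h with h | h | h
  · exact Or.inr (Or.inl h)
  · exact Or.inl h
  · exact Or.inr (Or.inr (by rwa [G.edge_symm]))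

lemma arc_arc_false (G : MixedGraph m n V) {a b : V} {j j' : Fin m}
    (h : G.arcColor a b = some j) (h' : G.arcColor b a = some j') : False := by
  have := G.arc_asymm a b (by simp [h]); simp [this] at h'

lemma arc_edge_false (G : MixedGraph m n V) {a b : V} {j : Fin m} {i : Fin n}
    (h : G.arcColor a b = some j) (h' : G.edgeColor a b = some i) : False := by
  have := G.arc_not_edge a b (by simp [h]); simp [this] at h'

lemma subset_conv (G : MixedGraph m n V) (N : Set V) : N ⊆ G.conv N := by
  intro x hx
  rw [conv, Set.mem_sInter]
  intro C hC
  exact hC.2 hx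

lemma conv_subset (G : MixedGraph m n V) {N C : Set V} (hC : G.IsConvex C) (hN : N ⊆ C) :
    G.conv N ⊆ C := fun _ hx => Set.mem_sInter.mp hx C ⟨hC, hN⟩

lemma conv_isConvex (G : MixedGraph m n V) (N : Set V) : G.IsConvex (G.conv N) := by
  intro a ha b hb x hx
  rw [conv, Set.mem_sInter] at ha hb ⊢
  intro C hC
  exact hC.1 a (ha C hC) b (hb C hC) x hx

/-- Fibers of a simple homomorphism are convex. -/
lemma fiber_convex [Fintype V] (G : MixedGraph m n V) (H : MixedGraph m n W)
    (φ : V → W) (hφ : G.IsSimpleHom H φ) (c : W) :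
    G.IsConvex {x | φ x = c} := by
  obtain ⟨-, harc, hedge⟩ := hφ
  intro a ha b hb x hbtw
  obtain ⟨hax, hbx, hnag⟩ := hbtw
  simp only [Set.mem_setOf_eq] at ha hb ⊢
  by_contra hx
  apply hnag
  have hane : φ a ≠ φ x := by rw [ha]; exact fun hc => hx hc.symm
  have hbne : φ b ≠ φ x := by rw [hb]; exact fun hc => hx hc.symm
  have hxa : φ x ≠ φ a := fun hc => hane hc.symm
  have hxb : φ x ≠ φ b := fun hc => hbne hc.symm
  have hba : φ b = φ a := by rw [ha, hb]
  rcases hax with h1 | h1 | h1 <;> rcases hbx with h2 | h2 | h2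
  · -- arc a→x, arc b→x
    obtain ⟨j1, hj1⟩ := Option.isSome_iff_exists.mp h1
    obtain ⟨j2, hj2⟩ := Option.isSome_iff_exists.mp h2
    have HA := (harc a x j1 hj1).resolve_left hane
    have HB := (harc b x j2 hj2).resolve_left hbne
    rw [hba] at HB
    rw [HA] at HB
    injection HB with HB
    exact Or.inr (Or.inl ⟨j1, hj1, HB ▸ hj2⟩)
  · -- arc a→x, arc x→b
    obtain ⟨j1, hj1⟩ := Option.isSome_iff_exists.mp h1
    obtain ⟨j2, hj2⟩ := Option.isSome_iff_exists.mp h2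
    have HA := (harc a x j1 hj1).resolve_left hane
    have HB := (harc x b j2 hj2).resolve_left hxb
    rw [hba] at HB
    exact (H.arc_arc_false HA HB).elim
  · -- arc a→x, edge b x
    obtain ⟨j1, hj1⟩ := Option.isSome_iff_exists.mp h1
    obtain ⟨i2, hi2⟩ := Option.isSome_iff_exists.mp h2
    have HA := (harc a x j1 hj1).resolve_left hane
    have HB := (hedge b x i2 hi2).resolve_left hbne
    rw [hba] at HB
    exact (H.arc_edge_false HA HB).elim
  · -- arc x→a, arc b→x
    obtain ⟨j1, hj1⟩ := Option.isSome_iff_exists.mp h1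
    obtain ⟨j2, hj2⟩ := Option.isSome_iff_exists.mp h2
    have HA := (harc x a j1 hj1).resolve_left hxa
    have HB := (harc b x j2 hj2).resolve_left hbne
    rw [hba] at HB
    exact (H.arc_arc_false HB HA).elim
  · -- arc x→a, arc x→b
    obtain ⟨j1, hj1⟩ := Option.isSome_iff_exists.mp h1
    obtain ⟨j2, hj2⟩ := Option.isSome_iff_exists.mp h2
    have HA := (harc x a j1 hj1).resolve_left hxa
    have HB := (harc x b j2 hj2).resolve_left hxb
    rw [hba] at HB
    rw [HA] at HB
    injection HB with HB
    exact Or.inr (Or.inr ⟨j1, hj1, HB ▸ hj2⟩)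
  · -- arc x→a, edge b x
    obtain ⟨j1, hj1⟩ := Option.isSome_iff_exists.mp h1
    obtain ⟨i2, hi2⟩ := Option.isSome_iff_exists.mp h2
    have HA := (harc x a j1 hj1).resolve_left hxa
    have HB := (hedge b x i2 hi2).resolve_left hbne
    rw [hba] at HB
    rw [H.edge_symm] at HB
    exact (H.arc_edge_false HA HB).elim
  · -- edge a x, arc b→x
    obtain ⟨i1, hi1⟩ := Option.isSome_iff_exists.mp h1
    obtain ⟨j2, hj2⟩ := Option.isSome_iff_exists.mp h2
    have HA := (hedge a x i1 hi1).resolve_left hane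
    have HB := (harc b x j2 hj2).resolve_left hbne
    rw [hba] at HB
    exact (H.arc_edge_false HB HA).elim
  · -- edge a x, arc x→b
    obtain ⟨i1, hi1⟩ := Option.isSome_iff_exists.mp h1
    obtain ⟨j2, hj2⟩ := Option.isSome_iff_exists.mp h2
    have HA := (hedge a x i1 hi1).resolve_left hane
    have HB := (harc x b j2 hj2).resolve_left hxb
    rw [hba] at HB
    rw [H.edge_symm] at HA
    exact (H.arc_edge_false HB HA).elim
  · -- edge a x, edge b x
    obtain ⟨i1, hi1⟩ := Option.isSome_iff_exists.mp h1
    obtain ⟨i2, hi2⟩ := Option.isSome_iff_exists.mp h2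
    have HA := (hedge a x i1 hi1).resolve_left hane
    have HB := (hedge b x i2 hi2).resolve_left hbne
    rw [hba] at HB
    rw [HA] at HB
    injection HB with HB
    exact Or.inl ⟨i1, hi1, HB ▸ hi2⟩

/-! ### Transport along an equivalence -/

def mapEquiv (H : MixedGraph m n W) (e : W ≃ X) : MixedGraph m n X where
  arcColor a b := H.arcColor (e.symm a) (e.symm b)
  edgeColor a b := H.edgeColor (e.symm a) (e.symm b)
  edge_symm _ _ := H.edge_symm _ _
  edge_irrefl _ := H.edge_irrefl _
  arc_asymm _ _ h := H.arc_asymm _ _ h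
  arc_not_edge _ _ h := H.arc_not_edge _ _ h

lemma isSimpleHom_mapEquiv [Fintype V] (G : MixedGraph m n V) (H : MixedGraph m n W)
    (φ : V → W) (h : G.IsSimpleHom H φ) (e : W ≃ X) :
    G.IsSimpleHom (mapEquiv H e) (fun x => e (φ x)) := by
  obtain ⟨h1, h2, h3⟩ := h
  refine ⟨?_, ?_, ?_⟩
  · rcases h1 with h1 | ⟨x, y, hxy⟩
    · exact Or.inl h1
    · exact Or.inr ⟨x, y, fun hc => hxy (e.injective hc)⟩
  · intro u v j hj
    rcases h2 u v j hj with h | h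
    · exact Or.inl (congrArg e h)
    · right; simpa [mapEquiv] using h
  · intro u v i hi
    rcases h3 u v i hi with h | h
    · exact Or.inl (congrArg e h)
    · right; simpa [mapEquiv] using h

/-! ### Collapsing a convex set -/

open Classical in
noncomputable def collapseMap (D : Set V) (u : V) (x : V) : {y : V // y ∉ D ∨ y = u} :=
  if h : x ∈ D then ⟨u, Or.inr rfl⟩ else ⟨x, Or.inl h⟩

lemma collapseMap_of_mem {D : Set V} {u x : V} (h : x ∈ D) :
    collapseMap D u x = ⟨u, Or.inr rfl⟩ := dif_pos h

lemma collapseMap_of_not_mem {D : Set V} {u x : V} (h : x ∉ D) :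
    collapseMap D u x = ⟨x, Or.inl h⟩ := dif_neg h

lemma mem_of_cmap {D : Set V} {u p : V} {a : {y : V // y ∉ D ∨ y = u}} (hu : u ∈ D)
    (h : collapseMap D u p = a) (ha : a.1 = u) : p ∈ D := by
  by_contra hp
  rw [collapseMap_of_not_mem hp] at h
  have : p = u := by rw [← h] at ha; exact ha
  exact hp (this ▸ hu)

lemma eq_of_cmap {D : Set V} {u p : V} {a : {y : V // y ∉ D ∨ y = u}} (hu : u ∈ D)
    (h : collapseMap D u p = a) (ha : a.1 ≠ u) : p ∉ D ∧ p = a.1 := by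
  by_cases hp : p ∈ D
  · rw [collapseMap_of_mem hp] at h
    exact absurd ((congrArg Subtype.val h).symm) ha
  · rw [collapseMap_of_not_mem hp] at h
    exact ⟨hp, congrArg Subtype.val h⟩

/-- The key agreement lemma: collapsing a convex set identifies adjacencies
consistently. -/
lemma collapse_agree (G : MixedGraph m n V) {D : Set V} {u : V} (hu : u ∈ D)
    (hD : G.IsConvex D) {a b : {y : V // y ∉ D ∨ y = u}} (hab : a ≠ b)
    {p q p' q' : V} (hp : collapseMap D u p = a) (hq : collapseMap D u q = b)
    (hp' : collapseMap D u p' = a) (hq' : collapseMap D u q' = b)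
    (hpq : G.Adj p q) (hpq' : G.Adj p' q') :
    (∃ i, G.edgeColor p q = some i ∧ G.edgeColor p' q' = some i) ∨
    (∃ j, G.arcColor p q = some j ∧ G.arcColor p' q' = some j) ∨
    (∃ j, G.arcColor q p = some j ∧ G.arcColor q' p' = some j) := by
  by_cases ha : a.1 = u
  · by_cases hb : b.1 = u
    · exact absurd (Subtype.ext (ha.trans hb.symm)) hab
    · have hpD := mem_of_cmap hu hp ha
      have hp'D := mem_of_cmap hu hp' ha
      obtain ⟨hqD, hqe⟩ := eq_of_cmap hu hq hb
      obtain ⟨hq'D, hq'e⟩ := eq_of_cmap hu hq' hb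
      have hqq : q' = q := by rw [hqe, hq'e]
      subst hqq
      have hnb : ¬ G.Between q' p p' := fun hB => hqD (hD p hpD p' hp'D q' hB)
      by_contra hnag
      exact hnb ⟨hpq, hpq', hnag⟩
  · by_cases hb : b.1 = u
    · have hqD := mem_of_cmap hu hq hb
      have hq'D := mem_of_cmap hu hq' hb
      obtain ⟨hpD, hpe⟩ := eq_of_cmap hu hp ha
      obtain ⟨hp'D, hp'e⟩ := eq_of_cmap hu hp' ha
      have hpp : p' = p := by rw [hpe, hp'e]
      subst hpp
      have hnb : ¬ G.Between p' q q' := fun hB => hpD (hD q hqD q' hq'D p' hB)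
      by_contra hnag
      apply hnb
      refine ⟨G.adj_symm hpq, G.adj_symm hpq', fun hag => hnag ?_⟩
      rcases hag with ⟨i, e1, e2⟩ | ⟨j, a1, a2⟩ | ⟨j, a1, a2⟩
      · exact Or.inl ⟨i, by rwa [G.edge_symm], by rwa [G.edge_symm]⟩
      · exact Or.inr (Or.inr ⟨j, a1, a2⟩)
      · exact Or.inr (Or.inl ⟨j, a1, a2⟩)
    · obtain ⟨hpD, hpe⟩ := eq_of_cmap hu hp ha
      obtain ⟨hp'D, hp'e⟩ := eq_of_cmap hu hp' ha
      obtain ⟨hqD, hqe⟩ := eq_of_cmap hu hq hb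
      obtain ⟨hq'D, hq'e⟩ := eq_of_cmap hu hq' hb
      have hpp : p' = p := by rw [hpe, hp'e]
      have hqq : q' = q := by rw [hqe, hq'e]
      subst hpp; subst hqq
      rcases hpq with h | h | h
      · obtain ⟨j, hj⟩ := Option.isSome_iff_exists.mp h
        exact Or.inr (Or.inl ⟨j, hj, hj⟩)
      · obtain ⟨j, hj⟩ := Option.isSome_iff_exists.mp h
        exact Or.inr (Or.inr ⟨j, hj, hj⟩)
      · obtain ⟨i, hi⟩ := Option.isSome_iff_exists.mp h
        exact Or.inl ⟨i, hi, hi⟩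

section Collapse

variable (G : MixedGraph m n V) {D : Set V} {u : V}

lemma arc_unique (hu : u ∈ D) (hD : G.IsConvex D)
    {a b : {y : V // y ∉ D ∨ y = u}} (hab : a ≠ b) {j j' : Fin m}
    (h1 : ∃ p q, collapseMap D u p = a ∧ collapseMap D u q = b ∧ G.arcColor p q = some j)
    (h2 : ∃ p q, collapseMap D u p = a ∧ collapseMap D u q = b ∧ G.arcColor p q = some j') :
    j = j' := by
  obtain ⟨p, q, hp, hq, hj⟩ := h1
  obtain ⟨p', q', hp', hq', hj'⟩ := h2
  rcases collapse_agree G hu hD hab hp hq hp' hq'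
      (Or.inl (by simp [hj])) (Or.inl (by simp [hj'])) with
    ⟨i, e1, e2⟩ | ⟨j0, a1, a2⟩ | ⟨j0, a1, a2⟩
  · exact (G.arc_edge_false hj e1).elim
  · rw [hj] at a1; rw [hj'] at a2
    injection a1 with a1; injection a2 with a2
    exact a1.trans a2.symm
  · exact (G.arc_arc_false hj a1).elim

lemma arc_rev_false (hu : u ∈ D) (hD : G.IsConvex D)
    {a b : {y : V // y ∉ D ∨ y = u}} (hab : a ≠ b) {j j' : Fin m}
    (h1 : ∃ p q, collapseMap D u p = a ∧ collapseMap D u q = b ∧ G.arcColor p q = some j)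
    (h2 : ∃ p q, collapseMap D u p = b ∧ collapseMap D u q = a ∧ G.arcColor p q = some j') :
    False := by
  obtain ⟨p, q, hp, hq, hj⟩ := h1
  obtain ⟨p', q', hp', hq', hj'⟩ := h2
  rcases collapse_agree G hu hD hab hp hq hq' hp'
      (Or.inl (by simp [hj])) (G.adj_symm (Or.inl (by simp [hj']))) with
    ⟨i, e1, e2⟩ | ⟨j0, a1, a2⟩ | ⟨j0, a1, a2⟩
  · exact G.arc_edge_false hj e1
  · exact G.arc_arc_false hj' a2
  · exact G.arc_arc_false hj a1

lemma arc_edge_rel_false (hu : u ∈ D) (hD : G.IsConvex D)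
    {a b : {y : V // y ∉ D ∨ y = u}} (hab : a ≠ b) {j : Fin m} {i : Fin n}
    (h1 : ∃ p q, collapseMap D u p = a ∧ collapseMap D u q = b ∧ G.arcColor p q = some j)
    (h2 : ∃ p q, collapseMap D u p = a ∧ collapseMap D u q = b ∧ G.edgeColor p q = some i) :
    False := by
  obtain ⟨p, q, hp, hq, hj⟩ := h1
  obtain ⟨p', q', hp', hq', hi⟩ := h2
  rcases collapse_agree G hu hD hab hp hq hp' hq'
      (Or.inl (by simp [hj])) (Or.inr (Or.inr (by simp [hi]))) with
    ⟨i0, e1, e2⟩ | ⟨j0, a1, a2⟩ | ⟨j0, a1, a2⟩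
  · exact G.arc_edge_false hj e1
  · exact G.arc_edge_false a2 hi
  · exact G.arc_arc_false hj a1

lemma edge_unique (hu : u ∈ D) (hD : G.IsConvex D)
    {a b : {y : V // y ∉ D ∨ y = u}} (hab : a ≠ b) {i i' : Fin n}
    (h1 : ∃ p q, collapseMap D u p = a ∧ collapseMap D u q = b ∧ G.edgeColor p q = some i)
    (h2 : ∃ p q, collapseMap D u p = a ∧ collapseMap D u q = b ∧ G.edgeColor p q = some i') :
    i = i' := by
  obtain ⟨p, q, hp, hq, hi⟩ := h1
  obtain ⟨p', q', hp', hq', hi'⟩ := h2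
  rcases collapse_agree G hu hD hab hp hq hp' hq'
      (Or.inr (Or.inr (by simp [hi]))) (Or.inr (Or.inr (by simp [hi']))) with
    ⟨i0, e1, e2⟩ | ⟨j0, a1, a2⟩ | ⟨j0, a1, a2⟩
  · rw [hi] at e1; rw [hi'] at e2
    injection e1 with e1; injection e2 with e2
    exact e1.trans e2.symm
  · exact (G.arc_edge_false a1 hi).elim
  · exact (G.arc_edge_false a1 (by rwa [G.edge_symm])).elim

open Classical in
noncomputable def collapseGraph (hu : u ∈ D) (hD : G.IsConvex D) :
    MixedGraph m n {y : V // y ∉ D ∨ y = u} where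
  arcColor a b :=
    if h : a ≠ b ∧ ∃ j : Fin m, ∃ p q : V,
        collapseMap D u p = a ∧ collapseMap D u q = b ∧ G.arcColor p q = some j
    then some h.2.choose else none
  edgeColor a b :=
    if h : a ≠ b ∧ ∃ i : Fin n, ∃ p q : V,
        collapseMap D u p = a ∧ collapseMap D u q = b ∧ G.edgeColor p q = some i
    then some h.2.choose else none
  edge_symm := by
    intro a b
    by_cases h : a ≠ b ∧ ∃ i : Fin n, ∃ p q : V,
        collapseMap D u p = a ∧ collapseMap D u q = b ∧ G.edgeColor p q = some i
    · have h' : b ≠ a ∧ ∃ i : Fin n, ∃ p q : V,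
          collapseMap D u p = b ∧ collapseMap D u q = a ∧ G.edgeColor p q = some i := by
        obtain ⟨hab, i, p, q, hp, hq, hi⟩ := h
        exact ⟨hab.symm, i, q, p, hq, hp, by rwa [G.edge_symm]⟩
      rw [dif_pos h, dif_pos h']
      congr 1
      apply edge_unique G hu hD h.1 h.2.choose_spec
      obtain ⟨p, q, hp, hq, hi⟩ := h'.2.choose_spec
      exact ⟨q, p, hq, hp, by rwa [G.edge_symm]⟩
    · have h' : ¬ (b ≠ a ∧ ∃ i : Fin n, ∃ p q : V,
          collapseMap D u p = b ∧ collapseMap D u q = a ∧ G.edgeColor p q = some i) := by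
        rintro ⟨hab, i, p, q, hp, hq, hi⟩
        exact h ⟨hab.symm, i, q, p, hq, hp, by rwa [G.edge_symm]⟩
      rw [dif_neg h, dif_neg h']
  edge_irrefl := by
    intro a
    rw [dif_neg]
    rintro ⟨hne, -⟩
    exact hne rfl
  arc_asymm := by
    intro a b hsome
    by_cases h : a ≠ b ∧ ∃ j : Fin m, ∃ p q : V,
        collapseMap D u p = a ∧ collapseMap D u q = b ∧ G.arcColor p q = some j
    · rw [dif_neg]
      rintro ⟨hba, j', hrel⟩
      obtain ⟨j, hrel0⟩ := h.2
      exact arc_rev_false G hu hD h.1 hrel0 hrel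
    · rw [dif_neg h] at hsome
      simp at hsome
  arc_not_edge := by
    intro a b hsome
    by_cases h : a ≠ b ∧ ∃ j : Fin m, ∃ p q : V,
        collapseMap D u p = a ∧ collapseMap D u q = b ∧ G.arcColor p q = some j
    · rw [dif_neg]
      rintro ⟨hab, i, hrel⟩
      obtain ⟨j, hrel0⟩ := h.2
      exact arc_edge_rel_false G hu hD h.1 hrel0 hrel
    · rw [dif_neg h] at hsome
      simp at hsome

lemma collapse_isSimpleHom [Fintype V] (hu : u ∈ D) (hD : G.IsConvex D)
    (hw : ∃ w, w ∉ D) :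
    G.IsSimpleHom (collapseGraph G hu hD) (collapseMap D u) := by
  refine ⟨Or.inr ?_, ?_, ?_⟩
  · obtain ⟨w, hwD⟩ := hw
    refine ⟨u, w, ?_⟩
    rw [collapseMap_of_mem hu, collapseMap_of_not_mem hwD]
    intro hc
    have : u = w := congrArg Subtype.val hc
    exact hwD (this ▸ hu)
  · intro p q j hj
    by_cases hc : collapseMap D u p = collapseMap D u q
    · exact Or.inl hc
    · right
      have hcond : (collapseMap D u p ≠ collapseMap D u q) ∧ ∃ j0 : Fin m, ∃ p0 q0 : V,
          collapseMap D u p0 = collapseMap D u p ∧ collapseMap D u q0 = collapseMap D u q ∧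
          G.arcColor p0 q0 = some j0 := ⟨hc, j, p, q, rfl, rfl, hj⟩
      simp only [collapseGraph]
      rw [dif_pos hcond]
      congr 1
      exact arc_unique G hu hD hc hcond.2.choose_spec ⟨p, q, rfl, rfl, hj⟩
  · intro p q i hi
    by_cases hc : collapseMap D u p = collapseMap D u q
    · exact Or.inl hc
    · right
      have hcond : (collapseMap D u p ≠ collapseMap D u q) ∧ ∃ i0 : Fin n, ∃ p0 q0 : V,
          collapseMap D u p0 = collapseMap D u p ∧ collapseMap D u q0 = collapseMap D u q ∧
          G.edgeColor p0 q0 = some i0 := ⟨hc, i, p, q, rfl, rfl, hi⟩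
      simp only [collapseGraph]
      rw [dif_pos hcond]
      congr 1
      exact edge_unique G hu hD hc hcond.2.choose_spec ⟨p, q, rfl, rfl, hi⟩

end Collapse

end MixedGraph

/-- An `(m,n)`-mixed graph `G` is an `(m,n)`-mixed simple
clique (`χₛ(G) = |V(G)|`) iff `conv({u,v}) = V(G)` for every pair of distinct
vertices `u, v`. -/
theorem stmt6 {m n : ℕ} {V : Type} [Fintype V] (G : MixedGraph m n V) :
    G.simpleChrom = Fintype.card V ↔
      ∀ u v : V, u ≠ v → G.conv {u, v} = Set.univ := by
  classical
  constructor
  · intro hchrom u v huv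
    by_contra hne
    set D := G.conv {u, v} with hDdef
    have hDc : G.IsConvex D := G.conv_isConvex _
    have hu : u ∈ D := G.subset_conv _ (by simp)
    have hv : v ∈ D := G.subset_conv _ (by simp)
    have hw : ∃ w, w ∉ D := by
      by_contra h
      push_neg at h
      exact hne (Set.eq_univ_of_forall h)
    have hhom := G.collapse_isSimpleHom hu hDc hw
    have hmem : Fintype.card {y : V // y ∉ D ∨ y = u} ∈
        {t : ℕ | ∃ H : MixedGraph m n (Fin t), ∃ φ : V → Fin t, G.IsSimpleHom H φ} :=
      ⟨MixedGraph.mapEquiv _ (Fintype.equivFin _), _,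
        G.isSimpleHom_mapEquiv _ _ hhom (Fintype.equivFin _)⟩
    have hle : G.simpleChrom ≤ Fintype.card {y : V // y ∉ D ∨ y = u} := Nat.sInf_le hmem
    have hlt : Fintype.card {y : V // y ∉ D ∨ y = u} < Fintype.card V := by
      apply Fintype.card_subtype_lt (x := v)
      push_neg
      exact ⟨hv, Ne.symm huv⟩
    rw [hchrom] at hle
    omega
  · intro hyp
    by_cases h0 : Fintype.card V = 0
    · have hE : IsEmpty V := Fintype.card_eq_zero_iff.mp h0
      have hS : {t : ℕ | ∃ H : MixedGraph m n (Fin t), ∃ φ : V → Fin t, G.IsSimpleHom H φ}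
          = ∅ := by
        ext t
        simp only [Set.mem_setOf_eq, Set.mem_empty_iff_false, iff_false]
        rintro ⟨H, φ, ⟨h1 | ⟨x, y, -⟩, -, -⟩⟩
        · omega
        · exact hE.elim x
      rw [MixedGraph.simpleChrom, hS, Nat.sInf_empty, h0]
    · have hpos : 0 < Fintype.card V := Nat.pos_of_ne_zero h0
      have hid : G.IsSimpleHom G id := by
        refine ⟨?_, fun u v j hj => Or.inr hj, fun u v i hi => Or.inr hi⟩
        rcases Nat.lt_or_ge 1 (Fintype.card V) with h1 | h1
        · obtain ⟨a, b, hab⟩ := Fintype.exists_pair_of_one_lt_card h1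
          exact Or.inr ⟨a, b, hab⟩
        · exact Or.inl (le_antisymm h1 hpos)
      have hmem : Fintype.card V ∈
          {t : ℕ | ∃ H : MixedGraph m n (Fin t), ∃ φ : V → Fin t, G.IsSimpleHom H φ} :=
        ⟨MixedGraph.mapEquiv G (Fintype.equivFin V), _,
          G.isSimpleHom_mapEquiv G id hid (Fintype.equivFin V)⟩
      refine le_antisymm (Nat.sInf_le hmem) (le_csInf ⟨_, hmem⟩ ?_)
      intro t ht
      by_contra hlt
      push_neg at hlt
      obtain ⟨H, φ, hφ⟩ := ht
      obtain ⟨p, q, hpq, hfeq⟩ := Fintype.exists_ne_map_eq_of_card_lt φ (by simpa using hlt)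
      have hCconv := G.fiber_convex H φ hφ (φ p)
      have hC : (Set.univ : Set V) ⊆ {x | φ x = φ p} := by
        rw [← hyp p q hpq]
        refine G.conv_subset hCconv ?_
        intro x hx
        simp only [Set.mem_insert_iff, Set.mem_singleton_iff] at hx
        rcases hx with rfl | rfl
        · rfl
        · exact hfeq.symm
      have hall : ∀ x, φ x = φ p := fun x => hC (Set.mem_univ x)
      rcases hφ.1 with h1 | ⟨x, y, hxy⟩
      · rw [h1] at hlt
        have ht0 : t = 0 := by omega
        subst ht0
        exact (φ p).elim0
      · exact hxy ((hall x).trans (hall y).symm)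
end

section
/- Let G be a complete (m,n)-mixed graph with χ_s(G) > 2 and let c be a minimum simple colouring of G. For all vertices u, v of G, if c(u) ≠ c(v) then conv({u,v}) = V(G). -/
namespace MixedGraph

variable {m n : ℕ} {V W : Type}

/-- The "type" of the adjacency from `a` to `b`. -/
def rel (G : MixedGraph m n V) (a b : V) : Option (Fin n ⊕ (Fin m ⊕ Fin m)) :=
  match G.edgeColor a b with
  | some i => some (.inl i)
  | none =>
    match G.arcColor a b with
    | some j => some (.inr (.inl j))
    | none => (G.arcColor b a).map (fun j => .inr (.inr j))

lemma rel_of_edge {G : MixedGraph m n V} {a b : V} {i : Fin n}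
    (h : G.edgeColor a b = some i) : G.rel a b = some (.inl i) := by
  simp [rel, h]

lemma rel_of_arc {G : MixedGraph m n V} {a b : V} {j : Fin m}
    (h : G.arcColor a b = some j) : G.rel a b = some (.inr (.inl j)) := by
  have he := G.arc_not_edge a b (by simp [h])
  simp [rel, he, h]

lemma rel_of_arc' {G : MixedGraph m n V} {a b : V} {j : Fin m}
    (h : G.arcColor b a = some j) : G.rel a b = some (.inr (.inr j)) := by
  have he := G.arc_not_edge b a (by simp [h])
  have he' : G.edgeColor a b = none := (G.edge_symm a b).trans he
  have ha : G.arcColor a b = none := G.arc_asymm b a (by simp [h])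
  simp [rel, he', ha, h]

lemma edge_of_rel {G : MixedGraph m n V} {a b : V} {i : Fin n}
    (h : G.rel a b = some (.inl i)) : G.edgeColor a b = some i := by
  rcases he : G.edgeColor a b with _ | i'
  · rcases ha : G.arcColor a b with _ | j
    · rcases hb : G.arcColor b a with _ | j <;> simp [rel, he, ha, hb] at h
    · simp [rel, he, ha] at h
  · simp [rel, he] at h
    rw [h]

lemma arc_of_rel {G : MixedGraph m n V} {a b : V} {j : Fin m}
    (h : G.rel a b = some (.inr (.inl j))) : G.arcColor a b = some j := by
  rcases he : G.edgeColor a b with _ | i'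
  · rcases ha : G.arcColor a b with _ | j'
    · rcases hb : G.arcColor b a with _ | j'' <;> simp [rel, he, ha, hb] at h
    · simp [rel, he, ha] at h
      rw [h]
  · simp [rel, he] at h

lemma arc'_of_rel {G : MixedGraph m n V} {a b : V} {j : Fin m}
    (h : G.rel a b = some (.inr (.inr j))) : G.arcColor b a = some j := by
  rcases he : G.edgeColor a b with _ | i'
  · rcases ha : G.arcColor a b with _ | j'
    · rcases hb : G.arcColor b a with _ | j'' <;> simp [rel, he, ha, hb] at h
      rw [h]
    · simp [rel, he, ha] at h
  · simp [rel, he] at h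

lemma rel_isSome_of_adj {G : MixedGraph m n V} {a b : V} (h : G.Adj a b) :
    (G.rel a b).isSome := by
  rcases h with h | h | h
  · obtain ⟨j, hj⟩ := Option.isSome_iff_exists.mp h
    rw [rel_of_arc hj]; rfl
  · obtain ⟨j, hj⟩ := Option.isSome_iff_exists.mp h
    rw [rel_of_arc' hj]; rfl
  · obtain ⟨i, hi⟩ := Option.isSome_iff_exists.mp h
    rw [rel_of_edge hi]; rfl

/-- Swap the direction data of a relation type. -/
def relSwap : (Fin n ⊕ (Fin m ⊕ Fin m)) → (Fin n ⊕ (Fin m ⊕ Fin m))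
  | .inl i => .inl i
  | .inr (.inl j) => .inr (.inr j)
  | .inr (.inr j) => .inr (.inl j)

lemma relSwap_relSwap (t : Fin n ⊕ (Fin m ⊕ Fin m)) : relSwap (relSwap t) = t := by
  rcases t with i | j | j <;> rfl

lemma rel_symm' {G : MixedGraph m n V} {a b : V} {t : Fin n ⊕ (Fin m ⊕ Fin m)}
    (h : G.rel a b = some t) : G.rel b a = some (relSwap t) := by
  rcases t with i | j | j
  · exact rel_of_edge ((G.edge_symm b a).trans (edge_of_rel h))
  · exact rel_of_arc' (arc_of_rel h)
  · exact rel_of_arc (arc'_of_rel h)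

lemma hom_rel [Fintype V] {G : MixedGraph m n V} {H : MixedGraph m n W} {φ : V → W}
    (hφ : G.IsSimpleHom H φ) {p q : V} (hne : φ p ≠ φ q)
    {t : Fin n ⊕ (Fin m ⊕ Fin m)} (h : G.rel p q = some t) :
    H.rel (φ p) (φ q) = some t := by
  rcases t with i | j | j
  · rcases hφ.2.2 p q i (edge_of_rel h) with h' | h'
    · exact absurd h' hne
    · exact rel_of_edge h'
  · rcases hφ.2.1 p q j (arc_of_rel h) with h' | h'
    · exact absurd h' hne
    · exact rel_of_arc h'
  · rcases hφ.2.1 q p j (arc'_of_rel h) with h' | h'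
    · exact absurd h'.symm hne
    · exact rel_of_arc' h'

/-- Build a simple hom from a rel-level statement. -/
lemma isSimpleHom_of_rel [Fintype V] {G : MixedGraph m n V} {H : MixedGraph m n W} {φ : V → W}
    (h0 : Fintype.card V = 1 ∨ ∃ x y : V, φ x ≠ φ y)
    (h : ∀ p q t, G.rel p q = some t → φ p = φ q ∨ H.rel (φ p) (φ q) = some t) :
    G.IsSimpleHom H φ := by
  refine ⟨h0, ?_, ?_⟩
  · intro p q j hj
    rcases h p q _ (rel_of_arc hj) with h' | h'
    · exact Or.inl h'
    · exact Or.inr (arc_of_rel h')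
  · intro p q i hi
    rcases h p q _ (rel_of_edge hi) with h' | h'
    · exact Or.inl h'
    · exact Or.inr (edge_of_rel h')

/-- Two vertices of a convex set agree on every vertex outside it (complete case). -/
lemma agree_of_convex {G : MixedGraph m n V} (hcomp : G.IsComplete) {C : Set V}
    (hconv : G.IsConvex C) {a b z : V} (ha : a ∈ C) (hb : b ∈ C) (hz : z ∉ C) :
    G.rel a z = G.rel b z := by
  by_cases hab : a = b
  · rw [hab]
  have haz : a ≠ z := fun h => hz (h ▸ ha)
  have hbz : b ≠ z := fun h => hz (h ▸ hb)
  have hadj1 : G.Adj a z := hcomp a z haz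
  have hadj2 : G.Adj b z := hcomp b z hbz
  have hnb : ¬ G.Between z a b := fun h => hz (hconv a ha b hb z h)
  have hdisj : (∃ i : Fin n, G.edgeColor a z = some i ∧ G.edgeColor b z = some i) ∨
      (∃ j : Fin m, G.arcColor a z = some j ∧ G.arcColor b z = some j) ∨
      (∃ j : Fin m, G.arcColor z a = some j ∧ G.arcColor z b = some j) := by
    by_contra hcon
    exact hnb ⟨hadj1, hadj2, hcon⟩
  rcases hdisj with ⟨i, h1, h2⟩ | ⟨j, h1, h2⟩ | ⟨j, h1, h2⟩
  · rw [rel_of_edge h1, rel_of_edge h2]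
  · rw [rel_of_arc h1, rel_of_arc h2]
  · rw [rel_of_arc' h1, rel_of_arc' h2]

/-- Pull back a mixed graph along a function. -/
def pullback (H : MixedGraph m n W) {W' : Type} (f : W' → W) (hf : Function.Injective f) :
    MixedGraph m n W' where
  arcColor a b := H.arcColor (f a) (f b)
  edgeColor a b := H.edgeColor (f a) (f b)
  edge_symm a b := H.edge_symm (f a) (f b)
  edge_irrefl a := H.edge_irrefl (f a)
  arc_asymm a b h := H.arc_asymm (f a) (f b) h
  arc_not_edge a b h := H.arc_not_edge (f a) (f b) h

lemma simpleChrom_le_card [Fintype V] [Fintype W] (G : MixedGraph m n V)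
    (H : MixedGraph m n W) (φ : V → W) (h : G.IsSimpleHom H φ) :
    G.simpleChrom ≤ Fintype.card W := by
  apply Nat.sInf_le
  set e := Fintype.equivFin W with he
  refine ⟨H.pullback e.symm e.symm.injective, fun v => e (φ v), ?_, ?_, ?_⟩
  · rcases h.1 with h1 | ⟨x, y, hxy⟩
    · exact Or.inl h1
    · exact Or.inr ⟨x, y, fun hh => hxy (e.injective hh)⟩
  · intro a b j hj
    rcases h.2.1 a b j hj with h1 | h1
    · exact Or.inl (congrArg e h1)
    · right
      show H.arcColor (e.symm (e (φ a))) (e.symm (e (φ b))) = some j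
      simpa using h1
  · intro a b i hi
    rcases h.2.2 a b i hi with h1 | h1
    · exact Or.inl (congrArg e h1)
    · right
      show H.edgeColor (e.symm (e (φ a))) (e.symm (e (φ b))) = some i
      simpa using h1

lemma simpleChrom_le_of_missed [Fintype V] [Fintype W] (G : MixedGraph m n V)
    (H : MixedGraph m n W) (φ : V → W) (h : G.IsSimpleHom H φ) (w0 : W)
    (hw : ∀ a, φ a ≠ w0) : G.simpleChrom ≤ Fintype.card W - 1 := by
  classical
  let φ' : V → {x : W // ¬ x = w0} := fun a => ⟨φ a, hw a⟩
  have hhom : G.IsSimpleHom (H.pullback (Subtype.val) Subtype.val_injective) φ' := by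
    refine ⟨?_, ?_, ?_⟩
    · rcases h.1 with h1 | ⟨x, y, hxy⟩
      · exact Or.inl h1
      · exact Or.inr ⟨x, y, fun hh => hxy (congrArg Subtype.val hh)⟩
    · intro a b j hj
      rcases h.2.1 a b j hj with h1 | h1
      · exact Or.inl (Subtype.ext h1)
      · exact Or.inr h1
    · intro a b i hi
      rcases h.2.2 a b i hi with h1 | h1
      · exact Or.inl (Subtype.ext h1)
      · exact Or.inr h1
  have := simpleChrom_le_card G _ _ hhom
  rwa [Fintype.card_subtype_compl, Fintype.card_subtype_eq] at this

end MixedGraph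


/-- Let `G` be a complete `(m,n)`-mixed graph with
`χₛ(G) > 2` and let `c` be a minimum simple colouring of `G`. If `c(u) ≠ c(v)`
then `conv({u,v}) = V(G)`. -/
theorem stmt9 {m n : ℕ} {V W : Type} [Fintype V] [Fintype W]
    (G : MixedGraph m n V) (hcomp : G.IsComplete) (hchi : 2 < G.simpleChrom)
    (H : MixedGraph m n W) (c : V → W)
    (hcard : Fintype.card W = G.simpleChrom) (hc : G.IsSimpleHom H c) :
    ∀ u v : V, c u ≠ c v → G.conv {u, v} = Set.univ := by
  classical
  intro u v huv
  refine Set.eq_univ_iff_forall.mpr fun z => ?_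
  rw [MixedGraph.conv, Set.mem_sInter]
  rintro C ⟨hCconv, hCsub⟩
  by_contra hz
  have hu : u ∈ C := hCsub (by simp)
  have hv : v ∈ C := hCsub (by simp)
  -- choose the collapse colour so that the collapse is non-constant
  have key : ∃ k, k ∈ C ∧ (k = u ∨ k = v) ∧ ∃ a, a ∉ C ∧ c a ≠ c k := by
    by_cases hall : ∀ a, a ∉ C → c a = c u
    · exact ⟨v, hv, Or.inr rfl, z, hz, by rw [hall z hz]; exact huv⟩
    · push_neg at hall
      obtain ⟨a, ha, hne⟩ := hall
      exact ⟨u, hu, Or.inl rfl, a, ha, hne⟩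
  obtain ⟨k, hkC, hkuv, a₀, ha₀, ha₀ne⟩ := key
  -- collapse C to the colour of k
  set c' : V → W := fun a => if a ∈ C then c k else c a with hc'def
  have hc'in : ∀ a, a ∈ C → c' a = c k := fun a h => by simp [hc'def, h]
  have hc'out : ∀ a, a ∉ C → c' a = c a := fun a h => by simp [hc'def, h]
  have hc' : G.IsSimpleHom H c' := by
    refine MixedGraph.isSimpleHom_of_rel (Or.inr ⟨a₀, k, ?_⟩) ?_
    · rw [hc'in k hkC, hc'out a₀ ha₀]; exact ha₀ne
    · intro p q t ht
      by_cases hp : p ∈ C <;> by_cases hq : q ∈ C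
      · exact Or.inl (by rw [hc'in p hp, hc'in q hq])
      · rw [hc'in p hp, hc'out q hq]
        by_cases hck : c k = c q
        · exact Or.inl hck
        · right
          have h1 : G.rel k q = G.rel p q := MixedGraph.agree_of_convex hcomp hCconv hkC hp hq
          exact MixedGraph.hom_rel hc hck (h1.trans ht)
      · rw [hc'out p hp, hc'in q hq]
        by_cases hck : c p = c k
        · exact Or.inl hck
        · right
          have h1 : G.rel k p = G.rel q p := MixedGraph.agree_of_convex hcomp hCconv hkC hq hp
          have ht' : G.rel q p = some (MixedGraph.relSwap t) := MixedGraph.rel_symm' ht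
          have h2 : H.rel (c k) (c p) = some (MixedGraph.relSwap t) :=
            MixedGraph.hom_rel hc (fun hh => hck hh.symm) (h1.trans ht')
          have h3 := MixedGraph.rel_symm' h2
          rwa [MixedGraph.relSwap_relSwap] at h3
      · rw [hc'out p hp, hc'out q hq]
        by_cases hpq : c p = c q
        · exact Or.inl hpq
        · exact Or.inr (MixedGraph.hom_rel hc hpq ht)
  by_cases hsurj : ∀ γ : W, ∃ a, c' a = γ
  · -- c u and c v are "twins" in H; merge them
    have hck_mem : c k = c u ∨ c k = c v := by
      rcases hkuv with rfl | rfl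
      · exact Or.inl rfl
      · exact Or.inr rfl
    have outside : ∀ γ : W, γ ≠ c u → γ ≠ c v → ∃ a, a ∉ C ∧ c a = γ := by
      intro γ h1 h2
      obtain ⟨a, haγ⟩ := hsurj γ
      have haC : a ∉ C := by
        intro hmem
        rw [hc'in a hmem] at haγ
        rcases hck_mem with hh | hh
        · exact h1 (haγ.symm.trans hh)
        · exact h2 (haγ.symm.trans hh)
      exact ⟨a, haC, (hc'out a haC) ▸ haγ⟩
    have twin : ∀ γ : W, γ ≠ c u → γ ≠ c v →
        ∃ t, H.rel (c u) γ = some t ∧ H.rel (c v) γ = some t := by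
      intro γ h1 h2
      obtain ⟨a, haC, hca⟩ := outside γ h1 h2
      have hadj : G.Adj u a := hcomp u a (fun h => haC (h ▸ hu))
      obtain ⟨t, ht⟩ := Option.isSome_iff_exists.mp (MixedGraph.rel_isSome_of_adj hadj)
      have hva : G.rel v a = G.rel u a := MixedGraph.agree_of_convex hcomp hCconv hv hu haC
      refine ⟨t, ?_, ?_⟩
      · rw [← hca]; exact MixedGraph.hom_rel hc (fun hh => h1 (hca ▸ hh).symm) ht
      · rw [← hca]
        exact MixedGraph.hom_rel hc (fun hh => h2 (hca ▸ hh).symm) (hva.trans ht)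
    -- the recolouring merging c v into c u
    set c₄ : V → W := fun a => if c a = c v then c u else c a with hc₄def
    have hmiss : ∀ a, c₄ a ≠ c v := by
      intro a
      by_cases h : c a = c v <;> simp [hc₄def, h]
      exact huv
    -- a vertex coloured neither c u nor c v
    have hW3 : 3 ≤ Fintype.card W := by omega
    have hex : ∃ γ : W, γ ≠ c u ∧ γ ≠ c v := by
      by_contra hcon
      push_neg at hcon
      have hsub : (Finset.univ : Finset W) ⊆ {c u, c v} := by
        intro x _
        by_cases hx : x = c u
        · simp [hx]
        · simp [hcon x hx]
      have := Finset.card_le_card hsub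
      have h2 : ({c u, c v} : Finset W).card ≤ 2 := Finset.card_insert_le _ _ |>.trans (by simp)
      simp only [Finset.card_univ] at this
      omega
    obtain ⟨γ, hγ1, hγ2⟩ := hex
    obtain ⟨aγ, haγC, hcaγ⟩ := outside γ hγ1 hγ2
    have hc₄ : G.IsSimpleHom H c₄ := by
      refine MixedGraph.isSimpleHom_of_rel (Or.inr ⟨aγ, v, ?_⟩) ?_
      · have h1 : c₄ aγ = γ := by simp [hc₄def, hcaγ, hγ2]
        have h2 : c₄ v = c u := by simp [hc₄def]
        rw [h1, h2]; exact hγ1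
      · intro p q t ht
        by_cases hpq : c p = c q
        · exact Or.inl (by simp [hc₄def, hpq])
        have hrel : H.rel (c p) (c q) = some t := MixedGraph.hom_rel hc hpq ht
        by_cases hp : c p = c v <;> by_cases hq : c q = c v
        · exact absurd (hp.trans hq.symm) hpq
        · -- c p = c v, c q ≠ c v
          by_cases hqu : c q = c u
          · exact Or.inl (by simp [hc₄def, hp, hq, hqu])
          · right
            obtain ⟨t', h1', h2'⟩ := twin (c q) hqu hq
            have : H.rel (c v) (c q) = some t := hp ▸ hrel
            rw [h2'] at this
            have h3 : H.rel (c u) (c q) = some t := by rw [h1', ← this]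
            simpa [hc₄def, hp, hq] using h3
        · -- c q = c v, c p ≠ c v
          by_cases hpu : c p = c u
          · exact Or.inl (by simp [hc₄def, hp, hq, hpu])
          · right
            obtain ⟨t', h1', h2'⟩ := twin (c p) hpu hp
            have hrel' : H.rel (c v) (c p) = some (MixedGraph.relSwap t) := by
              have := MixedGraph.rel_symm' hrel
              rwa [hq] at this
            rw [h2'] at hrel'
            have h3 : H.rel (c u) (c p) = some (MixedGraph.relSwap t) := by
              rw [h1', ← hrel']
            have h4 := MixedGraph.rel_symm' h3
            rw [MixedGraph.relSwap_relSwap] at h4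
            simpa [hc₄def, hp, hq] using h4
        · right
          simpa [hc₄def, hp, hq] using hrel
    have := MixedGraph.simpleChrom_le_of_missed G H c₄ hc₄ (c v) hmiss
    omega
  · push_neg at hsurj
    obtain ⟨γ, hγ⟩ := hsurj
    have := MixedGraph.simpleChrom_le_of_missed G H c' hc' γ hγ
    omega
end

section
/- Let G be a complete (m,n)-mixed graph with χ_s(G) > 2. Then the minimum simple colouring of G is unique up to relabelling of colours: for any two minimum simple colourings c and c′ of G and any vertices u, v ∈ V(G), c(u) = c(v) if and only if c′(u) = c′(v). -/
namespace MixedGraph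

variable {m n : ℕ} {V : Type}

/-- `x` does not distinguish `a` and `b`. -/
def Agree (G : MixedGraph m n V) (x a b : V) : Prop :=
  G.arcColor x a = G.arcColor x b ∧ G.arcColor a x = G.arcColor b x ∧
    G.edgeColor x a = G.edgeColor x b

lemma Agree.symm' {G : MixedGraph m n V} {x a b : V} (h : G.Agree x a b) : G.Agree x b a :=
  ⟨h.1.symm, h.2.1.symm, h.2.2.symm⟩

lemma Agree.trans' {G : MixedGraph m n V} {x a b c : V} (h : G.Agree x a b)
    (h' : G.Agree x b c) : G.Agree x a c :=
  ⟨h.1.trans h'.1, h.2.1.trans h'.2.1, h.2.2.trans h'.2.2⟩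

/-- A module: no outside vertex distinguishes two inside vertices. -/
def IsMod (G : MixedGraph m n V) (M : Set V) : Prop :=
  ∀ x ∉ M, ∀ a ∈ M, ∀ b ∈ M, G.Agree x a b

lemma isMod_empty (G : MixedGraph m n V) : G.IsMod (∅ : Set V) := by
  intro x hx a ha
  exact absurd ha (Set.notMem_empty a)

lemma adj_cases [Fintype V] {W : Type} {G : MixedGraph m n V} {H : MixedGraph m n W}
    {c : V → W} (hc : G.IsSimpleHom H c) {x y : V} (hadj : G.Adj x y) (hcne : c x ≠ c y) :
    (∃ j, G.arcColor x y = some j ∧ G.arcColor y x = none ∧ G.edgeColor x y = none ∧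
        H.arcColor (c x) (c y) = some j) ∨
    (∃ j, G.arcColor y x = some j ∧ G.arcColor x y = none ∧ G.edgeColor x y = none ∧
        H.arcColor (c y) (c x) = some j) ∨
    (∃ i, G.edgeColor x y = some i ∧ G.arcColor x y = none ∧ G.arcColor y x = none ∧
        H.edgeColor (c x) (c y) = some i) := by
  rcases hadj with h | h | h
  · obtain ⟨j, hj⟩ := Option.isSome_iff_exists.mp h
    refine Or.inl ⟨j, hj, G.arc_asymm x y (by simp [hj]), G.arc_not_edge x y (by simp [hj]), ?_⟩
    rcases hc.2.1 x y j hj with h' | h'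
    · exact absurd h' hcne
    · exact h'
  · obtain ⟨j, hj⟩ := Option.isSome_iff_exists.mp h
    have he : G.edgeColor y x = none := G.arc_not_edge y x (by simp [hj])
    refine Or.inr (Or.inl ⟨j, hj, G.arc_asymm y x (by simp [hj]),
      by rw [G.edge_symm]; exact he, ?_⟩)
    rcases hc.2.1 y x j hj with h' | h'
    · exact absurd h'.symm hcne
    · exact h'
  · obtain ⟨i, hi⟩ := Option.isSome_iff_exists.mp h
    have h1 : G.arcColor x y = none := by
      cases hxy : G.arcColor x y with
      | none => rfl
      | some j =>
        rw [G.arc_not_edge x y (by simp [hxy])] at hi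
        cases hi
    have h2 : G.arcColor y x = none := by
      cases hxy : G.arcColor y x with
      | none => rfl
      | some j =>
        have h3 := G.arc_not_edge y x (by simp [hxy])
        rw [G.edge_symm] at h3
        rw [h3] at hi
        cases hi
    refine Or.inr (Or.inr ⟨i, hi, h1, h2, ?_⟩)
    rcases hc.2.2 x y i hi with h' | h'
    · exact absurd h' hcne
    · exact h'

/-- Colour classes of a simple colouring of a complete mixed graph are modules. -/
lemma fiber_mod [Fintype V] {W : Type} {G : MixedGraph m n V} (hcomp : G.IsComplete)
    {H : MixedGraph m n W} {c : V → W} (hc : G.IsSimpleHom H c) (w : W) :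
    G.IsMod (c ⁻¹' {w}) := by
  intro x hx a ha b hb
  simp only [Set.mem_preimage, Set.mem_singleton_iff] at hx ha hb
  rcases eq_or_ne a b with rfl | hab
  · exact ⟨rfl, rfl, rfl⟩
  have hxa : x ≠ a := fun h => hx (by rw [h]; exact ha)
  have hxb : x ≠ b := fun h => hx (by rw [h]; exact hb)
  have hcxa : c x ≠ c a := by rw [ha]; exact hx
  have hcxb : c x ≠ c b := by rw [hb]; exact hx
  have Ha := adj_cases hc (hcomp x a hxa) hcxa
  have Hb := adj_cases hc (hcomp x b hxb) hcxb
  rw [ha] at Ha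
  rw [hb] at Hb
  rcases Ha with ⟨j, e1, e2, e3, eH⟩ | ⟨j, e1, e2, e3, eH⟩ | ⟨i, e1, e2, e3, eH⟩ <;>
    rcases Hb with ⟨j', f1, f2, f3, fH⟩ | ⟨j', f1, f2, f3, fH⟩ | ⟨i', f1, f2, f3, fH⟩
  · -- arc out / arc out
    obtain rfl : j = j' := Option.some.inj (eH.symm.trans fH)
    exact ⟨e1.trans f1.symm, e2.trans f2.symm, e3.trans f3.symm⟩
  · -- arc out / arc in : contradiction
    rw [H.arc_asymm (c x) w (by simp [eH])] at fH
    cases fH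
  · -- arc out / edge : contradiction
    rw [H.arc_not_edge (c x) w (by simp [eH])] at fH
    cases fH
  · rw [H.arc_asymm (c x) w (by simp [fH])] at eH
    cases eH
  · -- arc in / arc in
    obtain rfl : j = j' := Option.some.inj (eH.symm.trans fH)
    exact ⟨e2.trans f2.symm, e1.trans f1.symm, e3.trans f3.symm⟩
  · -- arc in / edge : contradiction
    have h3 := H.arc_not_edge w (c x) (by simp [eH])
    rw [H.edge_symm] at h3
    rw [h3] at fH
    cases fH
  · rw [H.arc_not_edge (c x) w (by simp [fH])] at eH
    cases eH
  · have h3 := H.arc_not_edge w (c x) (by simp [fH])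
    rw [H.edge_symm] at h3
    rw [h3] at eH
    cases eH
  · -- edge / edge
    obtain rfl : i = i' := Option.some.inj (eH.symm.trans fH)
    exact ⟨e2.trans f2.symm, e3.trans f3.symm, e1.trans f1.symm⟩

/-- A map whose fibres are modules and which is non-constant yields a simple
homomorphism to a quotient graph, bounding the simple chromatic number. -/
lemma simpleChrom_le_card_s10 [Fintype V] {W'' : Type} [Fintype W''] (G : MixedGraph m n V)
    (p : V → W'') (hmod : ∀ w, G.IsMod (p ⁻¹' {w}))
    (hnc : ∃ x y : V, p x ≠ p y) :
    G.simpleChrom ≤ Fintype.card W'' := by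
  classical
  obtain ⟨x0, y0, hxy0⟩ := hnc
  let e : W'' ≃ Fin (Fintype.card W'') := Fintype.equivFin W''
  let rep : W'' → V := fun w => if h : ∃ x, p x = w then h.choose else x0
  have hrep : ∀ x : V, p (rep (p x)) = p x := by
    intro x
    have h : ∃ y, p y = p x := ⟨x, rfl⟩
    simp only [rep, dif_pos h]
    exact h.choose_spec
  apply Nat.sInf_le
  show ∃ Hq : MixedGraph m n (Fin (Fintype.card W'')),
    ∃ φ : V → Fin (Fintype.card W''), G.IsSimpleHom Hq φ
  refine ⟨⟨fun i j => if i = j then none else G.arcColor (rep (e.symm i)) (rep (e.symm j)),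
          fun i j => if i = j then none else G.edgeColor (rep (e.symm i)) (rep (e.symm j)),
          ?_, ?_, ?_, ?_⟩, fun x => e (p x), ?_, ?_, ?_⟩
  · intro i j
    rcases eq_or_ne i j with rfl | h
    · simp
    · rw [if_neg h, if_neg h.symm, G.edge_symm]
  · intro i; simp
  · intro i j hs
    rcases eq_or_ne i j with rfl | h
    · simp at hs
    · rw [if_neg h] at hs
      rw [if_neg h.symm]
      exact G.arc_asymm _ _ hs
  · intro i j hs
    rcases eq_or_ne i j with rfl | h
    · simp at hs
    · rw [if_neg h] at hs
      rw [if_neg h]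
      exact G.arc_not_edge _ _ hs
  · exact Or.inr ⟨x0, y0, fun h => hxy0 (e.injective h)⟩
  · intro a b j hj
    rcases eq_or_ne (p a) (p b) with h | h
    · exact Or.inl (congrArg e h)
    · refine Or.inr ?_
      have hne : e (p a) ≠ e (p b) := fun hh => h (e.injective hh)
      show (if e (p a) = e (p b) then none
          else G.arcColor (rep (e.symm (e (p a)))) (rep (e.symm (e (p b))))) = some j
      rw [if_neg hne, e.symm_apply_apply, e.symm_apply_apply]
      have h1 : G.Agree a b (rep (p b)) :=
        hmod (p b) a h b rfl (rep (p b)) (hrep b)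
      have h2 : G.Agree (rep (p b)) a (rep (p a)) :=
        hmod (p a) (rep (p b)) (fun hh => h (((hrep b).symm.trans hh).symm)) a rfl
          (rep (p a)) (hrep a)
      rw [← h2.2.1, ← h1.1]
      exact hj
  · intro a b i hi
    rcases eq_or_ne (p a) (p b) with h | h
    · exact Or.inl (congrArg e h)
    · refine Or.inr ?_
      have hne : e (p a) ≠ e (p b) := fun hh => h (e.injective hh)
      show (if e (p a) = e (p b) then none
          else G.edgeColor (rep (e.symm (e (p a)))) (rep (e.symm (e (p b))))) = some i
      rw [if_neg hne, e.symm_apply_apply, e.symm_apply_apply]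
      have h1 : G.Agree a b (rep (p b)) :=
        hmod (p b) a h b rfl (rep (p b)) (hrep b)
      have h2 : G.Agree (rep (p b)) a (rep (p a)) :=
        hmod (p a) (rep (p b)) (fun hh => h (((hrep b).symm.trans hh).symm)) a rfl
          (rep (p a)) (hrep a)
      rw [G.edge_symm, ← h2.2.2, G.edge_symm, ← h1.2.2]
      exact hi

/-- A non-surjective module-fibre colouring gives a strict bound. -/
lemma simpleChrom_lt_card [Fintype V] {W' : Type} [Fintype W'] (G : MixedGraph m n V)
    (p : V → W') (hmod : ∀ w, G.IsMod (p ⁻¹' {w}))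
    (hnc : ∃ x y : V, p x ≠ p y) {a : W'} (ha : a ∉ Set.range p) :
    G.simpleChrom < Fintype.card W' := by
  classical
  let q : V → {w : W' // w ∈ Set.range p} := fun x => ⟨p x, ⟨x, rfl⟩⟩
  have hq : ∀ w : {w : W' // w ∈ Set.range p}, q ⁻¹' {w} = p ⁻¹' {w.1} := by
    intro w
    ext x
    simp [q, Subtype.ext_iff]
  have h1 : G.simpleChrom ≤ Fintype.card {w : W' // w ∈ Set.range p} := by
    refine simpleChrom_le_card_s10 G q ?_ ?_
    · intro w; rw [hq]; exact hmod w.1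
    · obtain ⟨x, y, h⟩ := hnc
      exact ⟨x, y, fun hh => h (congrArg Subtype.val hh)⟩
  have h2 : Fintype.card {w : W' // w ∈ Set.range p} < Fintype.card W' :=
    Fintype.card_lt_of_injective_of_notMem (Subtype.val) Subtype.val_injective
      (b := a) (by rintro ⟨⟨w, hw⟩, rfl⟩; exact ha hw)
  omega

/-- Union of a module with fibres that meet it is a module. -/
lemma hub_mod {G : MixedGraph m n V} {W' : Type} {c' : V → W'}
    (hfib : ∀ w, G.IsMod (c' ⁻¹' {w})) {M : Set V} (hM : G.IsMod M)
    {m₀ : V} (hm₀ : m₀ ∈ M) (T' : Set W') (hT' : ∀ a ∈ T', ∃ z ∈ M, c' z = a) :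
    G.IsMod (M ∪ c' ⁻¹' T') := by
  intro x hx a ha b hb
  have hxM : x ∉ M := fun h => hx (Or.inl h)
  have hxT : c' x ∉ T' := fun h => hx (Or.inr h)
  have key : ∀ y, y ∈ M ∪ c' ⁻¹' T' → G.Agree x y m₀ := by
    intro y hy
    rcases hy with hy | hy
    · exact hM x hxM y hy m₀ hm₀
    · obtain ⟨z, hzM, hz⟩ := hT' (c' y) hy
      have a1 : G.Agree x y z :=
        hfib (c' y) x
          (by simp only [Set.mem_preimage, Set.mem_singleton_iff]
              exact fun h => hxT (by rw [h]; exact hy))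
          y (by simp) z (by simp only [Set.mem_preimage, Set.mem_singleton_iff]; exact hz)
      exact a1.trans' (hM x hxM z hzM m₀ hm₀)
  exact (key a ha).trans' ((key b hb).symm')

/-- Difference of overlapping modules is a module. -/
lemma diff_mod {G : MixedGraph m n V} {M1 M2 : Set V} (h1 : G.IsMod M1) (h2 : G.IsMod M2)
    {w : V} (hw2 : w ∈ M2) (hw1 : w ∉ M1) : G.IsMod (M1 \ M2) := by
  intro x hx a ha b hb
  rcases Classical.em (x ∈ M1) with hxM1 | hxM1
  · have hxM2 : x ∈ M2 := by
      by_contra h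
      exact hx ⟨hxM1, h⟩
    have hA := h2 a ha.2 x hxM2 w hw2
    have hB := h2 b hb.2 x hxM2 w hw2
    have hW := h1 w hw1 a ha.1 b hb.1
    refine ⟨?_, ?_, ?_⟩
    · rw [hA.2.1, hW.1, ← hB.2.1]
    · rw [hA.1, hW.2.1, ← hB.1]
    · rw [G.edge_symm x a, hA.2.2, G.edge_symm a w, hW.2.2, G.edge_symm w b, ← hB.2.2,
        G.edge_symm b x]
  · exact h1 x hxM1 a ha.1 b hb.1

lemma key_lemma [Fintype V] {W W' : Type} [Fintype W] [Fintype W'] (G : MixedGraph m n V)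
    (hcomp : G.IsComplete) (hchi : 2 < G.simpleChrom)
    (H : MixedGraph m n W) (c : V → W) (hc : G.IsSimpleHom H c)
    (H' : MixedGraph m n W') (c' : V → W') (hcard' : Fintype.card W' = G.simpleChrom)
    (hc' : G.IsSimpleHom H' c') (u v : V) (huv : c u = c v) : c' u = c' v := by
  classical
  by_contra hne
  have hV1 : Fintype.card V ≠ 1 := by
    intro h
    obtain ⟨z, hz⟩ := Fintype.card_eq_one_iff.mp h
    have huv' : u = v := (hz u).trans (hz v).symm
    exact hne (by rw [huv'])
  have hncc : ∃ x y : V, c x ≠ c y := (hc.1).resolve_left hV1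
  have hncc' : ∃ x y : V, c' x ≠ c' y := (hc'.1).resolve_left hV1
  have hfib' : ∀ w, G.IsMod (c' ⁻¹' {w}) := fiber_mod hcomp hc'
  have hsurj' : ∀ a : W', ∃ x : V, c' x = a := by
    by_contra hs
    push_neg at hs
    obtain ⟨a, ha⟩ := hs
    have hlt : G.simpleChrom < Fintype.card W' :=
      simpleChrom_lt_card G c' hfib' hncc' (a := a)
        (by rintro ⟨x, hx⟩; exact ha x hx)
    omega
  set M : Set V := c ⁻¹' {c u} with hMdef
  have hMmod : G.IsMod M := fiber_mod hcomp hc (c u)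
  have huM : u ∈ M := by simp [hMdef]
  have hvM : v ∈ M := by
    simp only [hMdef, Set.mem_preimage, Set.mem_singleton_iff]
    exact huv.symm
  by_cases hTuniv : ∀ a : W', ∃ z ∈ M, c' z = a
  · -- M meets every colour class of c'
    obtain ⟨y₀, hy₀⟩ : ∃ y₀ : V, y₀ ∉ M := by
      obtain ⟨x₁, y₁, hxy₁⟩ := hncc
      rcases eq_or_ne (c x₁) (c u) with h | h
      · exact ⟨y₁, by simp only [hMdef, Set.mem_preimage, Set.mem_singleton_iff, ← h]
                      exact fun hh => hxy₁ hh.symm⟩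
      · exact ⟨x₁, by simp only [hMdef, Set.mem_preimage, Set.mem_singleton_iff]; exact h⟩
    obtain ⟨a₁, a₂, ha₁d, ha₂d, ha₁₂⟩ :
        ∃ a₁ a₂ : W', a₁ ≠ c' y₀ ∧ a₂ ≠ c' y₀ ∧ a₁ ≠ a₂ := by
      have h3 : 2 < Fintype.card W' := by omega
      obtain ⟨e1, e2, e3, h12, h13, h23⟩ := Fintype.two_lt_card_iff.mp h3
      rcases eq_or_ne e1 (c' y₀) with he1 | h1
      · exact ⟨e2, e3, fun h => h12 (h.trans he1.symm).symm, fun h => h13 (h.trans he1.symm).symm,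
          h23⟩
      · rcases eq_or_ne e2 (c' y₀) with he2 | h2
        · exact ⟨e1, e3, h1, fun h => h23 (h.trans he2.symm).symm, h13⟩
        · exact ⟨e1, e2, h1, h2, h12⟩
    set p : V → W' := fun x => if x ∈ M ∨ c' x = a₁ ∨ c' x = a₂ then a₁ else c' x with hp
    have hpfib : ∀ w, G.IsMod (p ⁻¹' {w}) := by
      intro w
      by_cases hw1 : w = a₁
      · rw [hw1]
        have hset : p ⁻¹' {a₁} = M ∪ c' ⁻¹' ({a₁, a₂} : Set W') := by
          ext x
          simp only [Set.mem_preimage, Set.mem_singleton_iff, Set.mem_union, hp,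
            Set.mem_insert_iff]
          by_cases hcond : x ∈ M ∨ c' x = a₁ ∨ c' x = a₂
          · rw [if_pos hcond]
            exact ⟨fun _ => hcond, fun _ => rfl⟩
          · rw [if_neg hcond]
            exact ⟨fun hxx => absurd (Or.inr (Or.inl hxx)) hcond, fun hxx => absurd hxx hcond⟩
        rw [hset]
        refine hub_mod hfib' hMmod huM _ ?_
        intro a _
        exact hTuniv a
      · by_cases hw2 : w = a₂
        · rw [hw2]
          have hset : p ⁻¹' {a₂} = (∅ : Set V) := by
            ext x
            simp only [Set.mem_preimage, Set.mem_singleton_iff, Set.mem_empty_iff_false,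
              iff_false, hp]
            by_cases hcond : x ∈ M ∨ c' x = a₁ ∨ c' x = a₂
            · rw [if_pos hcond]; exact ha₁₂
            · rw [if_neg hcond]
              exact fun hxx => hcond (Or.inr (Or.inr hxx))
          rw [hset]
          exact G.isMod_empty
        · have hset : p ⁻¹' {w} = c' ⁻¹' {w} \ M := by
            ext x
            simp only [Set.mem_preimage, Set.mem_singleton_iff, Set.mem_diff, hp]
            by_cases hcond : x ∈ M ∨ c' x = a₁ ∨ c' x = a₂
            · rw [if_pos hcond]
              constructor
              · intro hxx; exact absurd hxx.symm hw1
              · intro hxx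
                rcases hcond with hcond | hcond | hcond
                · exact absurd hcond hxx.2
                · exact absurd (hxx.1.symm.trans hcond) hw1
                · exact absurd (hxx.1.symm.trans hcond) hw2
            · rw [if_neg hcond]
              push_neg at hcond
              exact ⟨fun hxx => ⟨hxx, hcond.1⟩, fun hxx => hxx.1⟩
          rw [hset]
          obtain ⟨z, hz⟩ : ∃ z, z ∈ M ∧ c' z ≠ w := by
            rcases eq_or_ne (c' u) w with h | h
            · exact ⟨v, hvM, by rw [← h]; exact fun hh => hne hh.symm⟩
            · exact ⟨u, huM, h⟩
          refine diff_mod (hfib' w) hMmod hz.1 ?_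
          simp only [Set.mem_preimage, Set.mem_singleton_iff]
          exact hz.2
    have hpnc : ∃ x y : V, p x ≠ p y := by
      have hpu : p u = a₁ := by
        simp only [hp]
        rw [if_pos (Or.inl huM)]
      have hcnd : ¬(y₀ ∈ M ∨ c' y₀ = a₁ ∨ c' y₀ = a₂) := by
        push_neg
        exact ⟨hy₀, fun h => ha₁d h.symm, fun h => ha₂d h.symm⟩
      have hpy : p y₀ = c' y₀ := by
        simp only [hp]
        rw [if_neg hcnd]
      exact ⟨u, y₀, by rw [hpu, hpy]; exact ha₁d⟩
    have hpa₂ : a₂ ∉ Set.range p := by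
      rintro ⟨x, hx⟩
      simp only [hp] at hx
      by_cases hcond : x ∈ M ∨ c' x = a₁ ∨ c' x = a₂
      · rw [if_pos hcond] at hx; exact ha₁₂ hx
      · rw [if_neg hcond] at hx
        exact hcond (Or.inr (Or.inr hx))
    have hlt := simpleChrom_lt_card G p hpfib hpnc hpa₂
    omega
  · -- some colour class of c' misses M
    push_neg at hTuniv
    obtain ⟨a₀, ha₀⟩ := hTuniv
    set T : Set W' := c' '' M with hT
    have ha₀T : a₀ ∉ T := by
      rintro ⟨z, hzM, hz⟩
      exact (ha₀ z hzM) hz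
    have hcuT : c' u ∈ T := ⟨u, huM, rfl⟩
    have hcvT : c' v ∈ T := ⟨v, hvM, rfl⟩
    set p : V → W' := fun x => if c' x ∈ T then c' u else c' x with hp
    have hpfib : ∀ w, G.IsMod (p ⁻¹' {w}) := by
      intro w
      by_cases hw1 : w = c' u
      · rw [hw1]
        have hset : p ⁻¹' {c' u} = M ∪ c' ⁻¹' T := by
          ext x
          simp only [Set.mem_preimage, Set.mem_singleton_iff, Set.mem_union, hp]
          by_cases hcond : c' x ∈ T
          · rw [if_pos hcond]
            exact ⟨fun _ => Or.inr hcond, fun _ => rfl⟩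
          · rw [if_neg hcond]
            constructor
            · intro hxx
              exact absurd (show c' x ∈ T by rw [hxx]; exact hcuT) hcond
            · intro hxx
              rcases hxx with hxx | hxx
              · exact absurd ⟨x, hxx, rfl⟩ hcond
              · exact absurd hxx hcond
        rw [hset]
        refine hub_mod hfib' hMmod huM _ ?_
        rintro a ⟨z, hzM, hz⟩
        exact ⟨z, hzM, hz⟩
      · by_cases hwT : w ∈ T
        · have hset : p ⁻¹' {w} = (∅ : Set V) := by
            ext x
            simp only [Set.mem_preimage, Set.mem_singleton_iff, Set.mem_empty_iff_false,
              iff_false, hp]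
            by_cases hcond : c' x ∈ T
            · rw [if_pos hcond]
              exact fun h => hw1 h.symm
            · rw [if_neg hcond]
              exact fun h => hcond (h ▸ hwT)
          rw [hset]
          exact G.isMod_empty
        · have hset : p ⁻¹' {w} = c' ⁻¹' {w} := by
            ext x
            simp only [Set.mem_preimage, Set.mem_singleton_iff, hp]
            by_cases hcond : c' x ∈ T
            · rw [if_pos hcond]
              exact ⟨fun h => absurd h.symm hw1, fun h => absurd (h ▸ hcond) hwT⟩
            · rw [if_neg hcond]
          rw [hset]
          exact hfib' w
    obtain ⟨x₀, hx₀⟩ := hsurj' a₀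
    have hpnc : ∃ x y : V, p x ≠ p y := by
      have h1 : p u = c' u := by
        simp only [hp]
        rw [if_pos hcuT]
      have h2 : p x₀ = a₀ := by
        simp only [hp]
        rw [hx₀, if_neg ha₀T]
      refine ⟨u, x₀, ?_⟩
      rw [h1, h2]
      exact fun h => ha₀T (h ▸ hcuT)
    have hpcv : c' v ∉ Set.range p := by
      rintro ⟨x, hx⟩
      simp only [hp] at hx
      by_cases hcond : c' x ∈ T
      · rw [if_pos hcond] at hx
        exact hne hx
      · rw [if_neg hcond] at hx
        exact hcond (hx ▸ hcvT)
    have hlt := simpleChrom_lt_card G p hpfib hpnc hpcv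
    omega

end MixedGraph

/-- A complete `(m,n)`-mixed graph `G` with `χₛ(G) > 2` has a
unique minimum simple colouring up to relabelling of colours: any two minimum
simple colourings `c` and `c'` identify exactly the same pairs of vertices. -/
theorem stmt10 {m n : ℕ} {V W W' : Type} [Fintype V] [Fintype W] [Fintype W']
    (G : MixedGraph m n V) (hcomp : G.IsComplete) (hchi : 2 < G.simpleChrom)
    (H : MixedGraph m n W) (c : V → W)
    (hcard : Fintype.card W = G.simpleChrom) (hc : G.IsSimpleHom H c)
    (H' : MixedGraph m n W') (c' : V → W')
    (hcard' : Fintype.card W' = G.simpleChrom) (hc' : G.IsSimpleHom H' c') :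
    ∀ u v : V, c u = c v ↔ c' u = c' v := by
  intro u v
  constructor
  · exact fun h => MixedGraph.key_lemma G hcomp hchi H c hc H' c' hcard' hc' u v h
  · exact fun h => MixedGraph.key_lemma G hcomp hchi H' c' hc' H c hcard hc u v h
end

section
/- Let n ≥ 5 be odd and let D be the oriented graph (a (1,0)-mixed graph) with vertex set ℤ_n in which, for distinct u, v ∈ ℤ_n, there is an arc from u to v exactly when u − v ∈ S, where S = {2, n−1} ∪ {x ∈ {0,1,…,n−1} : x ≡ 0 (mod 4)} (elements read as residues modulo n). Then D is a simple oriented clique: χ_s(D) = n. -/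
set_option linter.unusedSectionVars false

section Aux

def Scond (n s : ℕ) : Prop := 0 < s ∧ s < n ∧ (s = 2 ∨ s = n - 1 ∨ s % 4 = 0)

variable {n : ℕ} [NeZero n]

lemma arcOf (D : MixedGraph 1 0 (ZMod n))
    (hD : ∀ u v : ZMod n, D.arcColor u v =
      if u ≠ v ∧ ((u - v).val = 2 ∨ (u - v).val = n - 1 ∨ (u - v).val % 4 = 0)
      then some 0 else none)
    (u v : ZMod n) (s : ℕ) (hs : Scond n s) (h : u - v = (s : ZMod n)) :
    D.arcColor u v = some 0 := by
  obtain ⟨hpos, hlt, hS⟩ := hs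
  have hne : u ≠ v := by
    intro he
    rw [he, sub_self] at h
    have hdvd : n ∣ s := (ZMod.natCast_eq_zero_iff ..).mp h.symm
    have := Nat.le_of_dvd hpos hdvd
    omega
  rw [hD, if_pos]
  refine ⟨hne, ?_⟩
  rw [h, ZMod.val_natCast_of_lt hlt]
  rcases hS with h1 | h1 | h1
  · exact Or.inl h1
  · exact Or.inr (Or.inl h1)
  · exact Or.inr (Or.inr h1)

lemma between_of (D : MixedGraph 1 0 (ZMod n)) (v a b : ZMod n)
    (h1 : D.arcColor v a = some 0) (h2 : D.arcColor b v = some 0) :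
    D.Between v a b := by
  refine ⟨Or.inr (Or.inl (by simp [h1])), Or.inl (by simp [h2]), ?_⟩
  rintro (⟨i, _⟩ | ⟨j, hav, _⟩ | ⟨j, _, hvb⟩)
  · exact i.elim0
  · have := D.arc_asymm v a (by simp [h1])
    rw [this] at hav; exact Option.some_ne_none _ hav.symm
  · have := D.arc_asymm b v (by simp [h2])
    rw [this] at hvb; exact Option.some_ne_none _ hvb.symm

lemma conv_univ (hn : 5 ≤ n) (hodd : Odd n)
    (D : MixedGraph 1 0 (ZMod n))
    (hD : ∀ u v : ZMod n, D.arcColor u v =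
      if u ≠ v ∧ ((u - v).val = 2 ∨ (u - v).val = n - 1 ∨ (u - v).val % 4 = 0)
      then some 0 else none)
    (C : Set (ZMod n)) (hC : D.IsConvex C)
    (a b : ZMod n) (ha : a ∈ C) (hb : b ∈ C) (hab : a ≠ b) :
    ∀ x, x ∈ C := by
  obtain ⟨mm, hm⟩ := hodd
  have hS2 : Scond n 2 := ⟨by omega, by omega, Or.inl rfl⟩
  have hSn1 : Scond n (n - 1) := ⟨by omega, by omega, Or.inr (Or.inl rfl)⟩
  have hn1 : ((n - 1 : ℕ) : ZMod n) = -1 := by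
    rw [Nat.cast_sub (by omega), ZMod.natCast_self]; ring
  -- key insertion step
  have step : ∀ (a b : ZMod n) (s1 s2 : ℕ), a ∈ C → b ∈ C → Scond n s1 → Scond n s2 →
      b - a = (s1 : ZMod n) + (s2 : ZMod n) → a + (s1 : ZMod n) ∈ C := by
    intro a b s1 s2 ha hb h1 h2 hsum
    have hva : D.arcColor (a + (s1 : ZMod n)) a = some 0 :=
      arcOf D hD _ _ s1 h1 (by ring)
    have hbv : D.arcColor b (a + (s1 : ZMod n)) = some 0 :=
      arcOf D hD _ _ s2 h2 (by rw [sub_add_eq_sub_sub, hsum]; ring)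
    exact hC a ha b hb _ (between_of D _ a b hva hbv)
  have consec : ∀ a : ZMod n, a ∈ C → a + 1 ∈ C → ∀ x, x ∈ C := by
    intro a ha ha1 x
    have key : ∀ k : ℕ, a + (k : ZMod n) ∈ C ∧ a + (k : ZMod n) + 1 ∈ C := by
      intro k
      induction k with
      | zero => simpa using ⟨ha, ha1⟩
      | succ k ih =>
        obtain ⟨h1, h2⟩ := ih
        have h3 : a + (k : ZMod n) + ((2 : ℕ) : ZMod n) ∈ C := by
          refine step (a + (k : ZMod n)) (a + (k : ZMod n) + 1) 2 (n - 1) h1 h2 hS2 hSn1 ?_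
          rw [hn1]; push_cast; ring
        constructor
        · push_cast at h2 ⊢; convert h2 using 1; ring
        · push_cast at h3 ⊢; convert h3 using 1; ring
    have := (key (x - a).val).1
    rwa [ZMod.natCast_rightInverse (x - a), add_sub_cancel] at this
  have dist2 : ∀ a : ZMod n, a ∈ C → a + 2 ∈ C → ∀ x, x ∈ C := by
    intro a ha h2
    have hv : (a + 2) + ((n - 1 : ℕ) : ZMod n) ∈ C := by
      refine step (a + 2) a (n - 1) (n - 1) h2 ha hSn1 hSn1 ?_
      rw [hn1]; ring
    rw [hn1] at hv
    exact consec a ha (by convert hv using 1; ring)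
  have mult4 : ∀ k : ℕ, ∀ a : ZMod n, 0 < k → 4 * k < n → a ∈ C →
      a + ((4 * k : ℕ) : ZMod n) ∈ C → ∀ x, x ∈ C := by
    intro k
    induction k with
    | zero => intro a hk; omega
    | succ k ih =>
      intro a hk hlt ha hb
      by_cases hk0 : k = 0
      · subst hk0
        have h2 : a + ((2 : ℕ) : ZMod n) ∈ C := by
          refine step a _ 2 2 ha hb hS2 hS2 ?_
          rw [add_sub_cancel_left]; push_cast; ring
        exact dist2 a ha (by push_cast at h2 ⊢; convert h2 using 1)
      · have hS4 : Scond n 4 := ⟨by omega, by omega, Or.inr (Or.inr rfl)⟩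
        have hS4k : Scond n (4 * k) := ⟨by omega, by omega, Or.inr (Or.inr (by omega))⟩
        have h4 : a + ((4 : ℕ) : ZMod n) ∈ C := by
          refine step a _ 4 (4 * k) ha hb hS4 hS4k ?_
          rw [add_sub_cancel_left]; push_cast; ring
        refine ih (a + ((4 : ℕ) : ZMod n)) (by omega) (by omega) h4 ?_
        convert hb using 1; push_cast; ring
  have gen : ∀ d : ℕ, 0 < d → d < n → d % 4 ≠ 1 → ∀ a : ZMod n, a ∈ C →
      a + (d : ZMod n) ∈ C → ∀ x, x ∈ C := by
    intro d hd hdn h4 a ha hb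
    rcases (by omega : d % 4 = 0 ∨ d % 4 = 2 ∨ d % 4 = 3) with h | h | h
    · refine mult4 (d / 4) a (by omega) (by omega) ha ?_
      rw [show 4 * (d / 4) = d by omega]; exact hb
    · rcases (by omega : d = 2 ∨ 6 ≤ d) with h2 | h2
      · subst h2; exact dist2 a ha (by push_cast at hb ⊢; convert hb using 1)
      · have hSd2 : Scond n (d - 2) := ⟨by omega, by omega, Or.inr (Or.inr (by omega))⟩
        have hstep : a + ((2 : ℕ) : ZMod n) ∈ C := by
          refine step a _ 2 (d - 2) ha hb hS2 hSd2 ?_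
          rw [add_sub_cancel_left, ← Nat.cast_add]
          congr 1; omega
        exact dist2 a ha (by push_cast at hstep ⊢; convert hstep using 1)
    · -- d % 4 = 3 : d ≠ n - 1 since n - 1 is even
      have hdn1 : d + 1 < n := by omega
      have hSd1 : Scond n (d + 1) := ⟨by omega, by omega, Or.inr (Or.inr (by omega))⟩
      have hstep : a + ((n - 1 : ℕ) : ZMod n) ∈ C := by
        refine step a _ (n - 1) (d + 1) ha hb hSn1 hSd1 ?_
        rw [add_sub_cancel_left, hn1]
        push_cast; ring
      rw [hn1] at hstep
      exact consec (a + -1) hstep (by convert ha using 1; ring)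
  -- main argument
  intro x
  have hd0 : 0 < (b - a).val := by
    have hne : b - a ≠ 0 := sub_ne_zero.mpr (Ne.symm hab)
    have := (ZMod.val_eq_zero (b - a)).not.mpr hne
    omega
  have hdn : (b - a).val < n := ZMod.val_lt _
  have hba : b = a + (((b - a).val : ℕ) : ZMod n) := by
    rw [ZMod.natCast_rightInverse (b - a)]; ring
  by_cases h4 : (b - a).val % 4 = 1
  · rcases (by omega : (b - a).val = 1 ∨ 5 ≤ (b - a).val) with h1 | h1
    · refine consec a ha ?_ x
      rw [h1] at hba; push_cast at hba; rw [← hba]; exact hb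
    · -- use the reversed pair with distance n - d
      have hab' : a = b + ((n - (b - a).val : ℕ) : ZMod n) := by
        rw [Nat.cast_sub (by omega), ZMod.natCast_self, ZMod.natCast_rightInverse (b - a)]
        ring
      refine gen (n - (b - a).val) (by omega) (by omega) (by omega) b hb ?_ x
      rw [← hab']; exact ha
  · refine gen (b - a).val hd0 hdn h4 a ha ?_ x
    rw [← hba]; exact hb
end Aux

/-- For odd `n ≥ 5`, the Cayley digraph on `ℤₙ` with
connection set `S = {2, n−1} ∪ {x ∈ {0,…,n−1} : x ≡ 0 (mod 4)}` (an arc from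
`u` to `v`, for distinct `u,v`, exactly when `u − v ∈ S`) is a simple oriented
clique: its simple chromatic number is `n`. -/
theorem stmt11 (n : ℕ) [NeZero n] (hn : 5 ≤ n) (hodd : Odd n)
    (D : MixedGraph 1 0 (ZMod n))
    (hD : ∀ u v : ZMod n, D.arcColor u v =
      if u ≠ v ∧ ((u - v).val = 2 ∨ (u - v).val = n - 1 ∨ (u - v).val % 4 = 0)
      then some 0 else none) :
    D.simpleChrom = n := by
  have hcard : Fintype.card (ZMod n) = n := ZMod.card n
  set T : Set ℕ :=
    {t : ℕ | ∃ H : MixedGraph 1 0 (Fin t), ∃ φ : ZMod n → Fin t, D.IsSimpleHom H φ} with hT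
  have hmem : n ∈ T := by
    let e : ZMod n ≃ Fin n := Fintype.equivFinOfCardEq hcard
    refine ⟨⟨fun x y => D.arcColor (e.symm x) (e.symm y), fun _ _ => none, fun _ _ => rfl,
      fun _ => rfl, fun x y h => D.arc_asymm _ _ h, fun _ _ _ => rfl⟩, e, ?_, ?_, ?_⟩
    · right
      haveI : Fact (1 < n) := ⟨by omega⟩
      exact ⟨0, 1, fun hc => zero_ne_one (α := ZMod n) (e.injective hc)⟩
    · intro u v j hj
      right
      show D.arcColor (e.symm (e u)) (e.symm (e v)) = some j
      simpa using hj
    · intro u v i; exact i.elim0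
  have hlb : ∀ t ∈ T, n ≤ t := by
    rintro t ⟨H, φ, hφ1, hφ2, -⟩
    have hinj : Function.Injective φ := by
      intro u w huw
      by_contra hne
      set C : Set (ZMod n) := {x | φ x = φ u} with hCdef
      have hC : D.IsConvex C := by
        intro p hp q hq v hv
        by_contra hvC
        obtain ⟨hpv, hqv, hneg⟩ := hv
        have adjc : ∀ x : ZMod n, D.Adj x v →
            D.arcColor x v = some 0 ∨ D.arcColor v x = some 0 := by
          intro x hx
          rcases hx with hx | hx | hx
          · left
            obtain ⟨j, hj⟩ := Option.isSome_iff_exists.mp hx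
            rw [Subsingleton.elim (0 : Fin 1) j]; exact hj
          · right
            obtain ⟨j, hj⟩ := Option.isSome_iff_exists.mp hx
            rw [Subsingleton.elim (0 : Fin 1) j]; exact hj
          · obtain ⟨i, _⟩ := Option.isSome_iff_exists.mp hx; exact i.elim0
        have hpu : φ p = φ u := hp
        have hqu : φ q = φ u := hq
        have hvu : φ v ≠ φ u := hvC
        rcases adjc p hpv with h1 | h1 <;> rcases adjc q hqv with h2 | h2
        · exact hneg (Or.inr (Or.inl ⟨0, h1, h2⟩))
        · have Ha := (hφ2 p v 0 h1).resolve_left (fun h => hvu (h.symm.trans hpu))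
          have Hb := (hφ2 v q 0 h2).resolve_left (fun h => hvu (h.trans hqu))
          rw [hqu, ← hpu] at Hb
          have := H.arc_asymm (φ p) (φ v) (by simp [Ha])
          rw [this] at Hb; exact Option.some_ne_none _ Hb.symm
        · have Ha := (hφ2 q v 0 h2).resolve_left (fun h => hvu (h.symm.trans hqu))
          have Hb := (hφ2 v p 0 h1).resolve_left (fun h => hvu (h.trans hpu))
          rw [hpu, ← hqu] at Hb
          have := H.arc_asymm (φ q) (φ v) (by simp [Ha])
          rw [this] at Hb; exact Option.some_ne_none _ Hb.symm
        · exact hneg (Or.inr (Or.inr ⟨0, h1, h2⟩))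
      have hall := conv_univ hn hodd D hD C hC u w rfl huw.symm hne
      rcases hφ1 with h1 | ⟨x, y, hxy⟩
      · rw [hcard] at h1; omega
      · exact hxy ((hall x).trans (hall y).symm)
    calc n = Fintype.card (ZMod n) := hcard.symm
      _ ≤ Fintype.card (Fin t) := Fintype.card_le_of_injective φ hinj
      _ = t := Fintype.card_fin t
  exact le_antisymm (Nat.sInf_le hmem) (le_csInf ⟨n, hmem⟩ hlb)
end

section
/- For n ≥ 3 let H_n be the 2-edge-coloured graph with vertex set {x_0,…,x_{n−1}} ∪ {y_0,…,y_{n−1}}, whose edge set consists of all pairs x_i y_j (0 ≤ i, j ≤ n−1, the edges of K_{n,n}) together with the cycle edges x_i x_{[i+1]_n} and y_i y_{[i+1]_n} for 0 ≤ i ≤ n−1 (indices modulo n), where the edges x_i x_{[i+1]_n}, y_i y_{[i+1]_n} and x_j y_j receive colour 1 and all other edges receive colour 2. Then H_n is a 2-edge-coloured simple clique: χ_s(H_n) = 2n. -/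
section Aux

variable {n : ℕ}

/-- Successor modulo `n` on `Fin n`. -/
def finSucc (hn : 3 ≤ n) (j : Fin n) : Fin n :=
  ⟨((j : ℕ) + 1) % n, Nat.mod_lt _ (by omega)⟩

/-- Predecessor modulo `n` on `Fin n`. -/
def finPred (hn : 3 ≤ n) (j : Fin n) : Fin n :=
  ⟨((j : ℕ) + (n - 1)) % n, Nat.mod_lt _ (by omega)⟩

lemma finSucc_ne (hn : 3 ≤ n) (j : Fin n) : finSucc hn j ≠ j := by
  have hj := j.isLt
  intro h
  have hval : ((j : ℕ) + 1) % n = (j : ℕ) := congrArg Fin.val h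
  rcases Nat.lt_or_ge ((j : ℕ) + 1) n with h' | h'
  · rw [Nat.mod_eq_of_lt h'] at hval; omega
  · have h'' : (j : ℕ) + 1 = n := by omega
    rw [h'', Nat.mod_self] at hval; omega

lemma finPred_adj (hn : 3 ≤ n) (j : Fin n) :
    ((finPred hn j : ℕ) + 1) % n = (j : ℕ) := by
  have hj := j.isLt
  show (((j : ℕ) + (n - 1)) % n + 1) % n = (j : ℕ)
  rw [Nat.mod_add_mod]
  have h1 : (j : ℕ) + (n - 1) + 1 = (j : ℕ) + n := by omega
  rw [h1, Nat.add_mod_right, Nat.mod_eq_of_lt hj]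

lemma finPred_ne (hn : 3 ≤ n) (j : Fin n) : finPred hn j ≠ j := by
  intro h
  apply finSucc_ne hn j
  have := finPred_adj hn j
  rw [h] at this
  exact Fin.ext this

lemma finSucc_ne_finPred (hn : 3 ≤ n) (j : Fin n) : finSucc hn j ≠ finPred hn j := by
  have hj := j.isLt
  intro h
  have h1 : (finSucc hn (finSucc hn j) : ℕ) = ((finPred hn j : ℕ) + 1) % n := by
    rw [h]; rfl
  rw [finPred_adj hn j] at h1
  have hval : (((j : ℕ) + 1) % n + 1) % n = (j : ℕ) := h1
  rw [Nat.mod_add_mod] at hval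
  rcases Nat.lt_or_ge ((j : ℕ) + 2) n with h' | h'
  · rw [Nat.mod_eq_of_lt h'] at hval; omega
  · have h'' : (j : ℕ) + 1 + 1 = n ∨ (j : ℕ) + 1 + 1 = n + 1 := by omega
    rcases h'' with h'' | h''
    · rw [h'', Nat.mod_self] at hval; omega
    · rw [h'', Nat.add_mod_left, Nat.mod_eq_of_lt (by omega : 1 < n)] at hval
      omega

lemma stmt13_inj (n : ℕ) (hn : 3 ≤ n) (H : MixedGraph 0 2 (Fin n ⊕ Fin n))
    (hxx : ∀ i j : Fin n, H.edgeColor (Sum.inl i) (Sum.inl j) =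
      if ((i : ℕ) + 1) % n = (j : ℕ) ∨ ((j : ℕ) + 1) % n = (i : ℕ)
      then some 0 else none)
    (hyy : ∀ i j : Fin n, H.edgeColor (Sum.inr i) (Sum.inr j) =
      if ((i : ℕ) + 1) % n = (j : ℕ) ∨ ((j : ℕ) + 1) % n = (i : ℕ)
      then some 0 else none)
    (hxy : ∀ i j : Fin n, H.edgeColor (Sum.inl i) (Sum.inr j) =
      some (if i = j then 0 else 1))
    {W : Type} (H' : MixedGraph 0 2 W) (φ : Fin n ⊕ Fin n → W)
    (hφ : H.IsSimpleHom H' φ) : Function.Injective φ := by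
  have hne01 : (0 : Fin 2) ≠ 1 := by decide
  -- colour facts
  have eXY : ∀ i j : Fin n, i ≠ j → H.edgeColor (Sum.inl i) (Sum.inr j) = some 1 := by
    intro i j h; rw [hxy, if_neg h]
  have eXY0 : ∀ i : Fin n, H.edgeColor (Sum.inl i) (Sum.inr i) = some 0 := by
    intro i; rw [hxy, if_pos rfl]
  have eYX : ∀ i j : Fin n, i ≠ j → H.edgeColor (Sum.inr j) (Sum.inl i) = some 1 := by
    intro i j h; rw [← H.edge_symm]; exact eXY i j h
  have eYX0 : ∀ i : Fin n, H.edgeColor (Sum.inr i) (Sum.inl i) = some 0 := by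
    intro i; rw [← H.edge_symm]; exact eXY0 i
  -- key collapsing lemma
  have key : ∀ u v w : Fin n ⊕ Fin n, ∀ c c' : Fin 2, φ u = φ v →
      H.edgeColor u w = some c → H.edgeColor v w = some c' → c ≠ c' → φ w = φ u := by
    intro u v w c c' huv hc hc' hcc
    rcases hφ.2.2 u w c hc with h | h
    · exact h.symm
    · rcases hφ.2.2 v w c' hc' with h' | h'
      · exact h'.symm.trans huv.symm
      · exfalso
        rw [huv] at h
        rw [h] at h'
        exact hcc (Option.some.inj h')
  -- reduce any identification to a same-index identification
  have mixed : ∀ i j : Fin n, i ≠ j → φ (Sum.inl i) = φ (Sum.inr j) →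
      ∃ k : Fin n, φ (Sum.inl k) = φ (Sum.inr k) := by
    intro i j hij hphi
    set k : Fin n := if finSucc hn j = i then finPred hn j else finSucc hn j with hk
    have hkj : k ≠ j := by
      rw [hk]; split
      · exact finPred_ne hn j
      · exact finSucc_ne hn j
    have hki : k ≠ i := by
      rw [hk]; split
      · rename_i h
        intro h'
        exact finSucc_ne_finPred hn j (h.trans h'.symm)
      · rename_i h
        exact h
    have hadj : ((j : ℕ) + 1) % n = (k : ℕ) ∨ ((k : ℕ) + 1) % n = (j : ℕ) := by
      rw [hk]; split
      · exact Or.inr (finPred_adj hn j)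
      · exact Or.inl rfl
    have hYY : H.edgeColor (Sum.inr j) (Sum.inr k) = some 0 := by
      rw [hyy, if_pos hadj]
    have step1 : φ (Sum.inr k) = φ (Sum.inr j) :=
      key (Sum.inr j) (Sum.inl i) (Sum.inr k) 0 1 hphi.symm hYY (eXY i k hki.symm) hne01
    have step2 : φ (Sum.inl j) = φ (Sum.inr j) :=
      key (Sum.inr j) (Sum.inr k) (Sum.inl j) 0 1 step1.symm (eYX0 j) (eYX j k (Ne.symm hkj)) hne01
    exact ⟨j, step2⟩
  have collapse : ∀ a b : Fin n ⊕ Fin n, a ≠ b → φ a = φ b → False := by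
    intro a b hab hphi
    -- first obtain a same-index identification
    have sameIdx : ∃ k : Fin n, φ (Sum.inl k) = φ (Sum.inr k) := by
      rcases a with i | i <;> rcases b with j | j
      · have hij : i ≠ j := fun h => hab (by rw [h])
        have h1 : φ (Sum.inr i) = φ (Sum.inl i) :=
          key (Sum.inl i) (Sum.inl j) (Sum.inr i) 0 1 hphi (eXY0 i)
            (eXY j i (Ne.symm hij)) hne01
        exact ⟨i, h1.symm⟩
      · by_cases hij : i = j
        · subst hij; exact ⟨i, hphi⟩
        · exact mixed i j hij hphi
      · by_cases hij : j = i
        · subst hij; exact ⟨j, hphi.symm⟩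
        · exact mixed j i hij hphi.symm
      · have hij : i ≠ j := fun h => hab (by rw [h])
        have h1 : φ (Sum.inl i) = φ (Sum.inr i) :=
          key (Sum.inr i) (Sum.inr j) (Sum.inl i) 0 1 hphi (eYX0 i)
            (eYX i j hij) hne01
        exact ⟨i, h1⟩
    obtain ⟨i0, h0⟩ := sameIdx
    -- propagation along the cycles
    have prop : ∀ i : Fin n, φ (Sum.inl i) = φ (Sum.inr i) →
        φ (Sum.inl (finSucc hn i)) = φ (Sum.inl i) ∧
        φ (Sum.inr (finSucc hn i)) = φ (Sum.inl i) := by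
      intro i h
      have hXXadj : H.edgeColor (Sum.inl i) (Sum.inl (finSucc hn i)) = some 0 := by
        rw [hxx, if_pos (Or.inl (show ((i : ℕ) + 1) % n = ((finSucc hn i : Fin n) : ℕ) from rfl))]
      have hYYadj : H.edgeColor (Sum.inr i) (Sum.inr (finSucc hn i)) = some 0 := by
        rw [hyy, if_pos (Or.inl (show ((i : ℕ) + 1) % n = ((finSucc hn i : Fin n) : ℕ) from rfl))]
      constructor
      · exact key (Sum.inl i) (Sum.inr i) (Sum.inl (finSucc hn i)) 0 1 h hXXadj
          (eYX (finSucc hn i) i (finSucc_ne hn i)) hne01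
      · have := key (Sum.inr i) (Sum.inl i) (Sum.inr (finSucc hn i)) 0 1 h.symm hYYadj
          (eXY i (finSucc hn i) (fun h' => finSucc_ne hn i h'.symm)) hne01
        exact this.trans h.symm
    have iter : ∀ d : ℕ, φ (Sum.inl ((finSucc hn)^[d] i0)) = φ (Sum.inl i0) ∧
        φ (Sum.inr ((finSucc hn)^[d] i0)) = φ (Sum.inl i0) := by
      intro d
      induction d with
      | zero => exact ⟨rfl, h0.symm⟩
      | succ d ih =>
        have hsame : φ (Sum.inl ((finSucc hn)^[d] i0)) = φ (Sum.inr ((finSucc hn)^[d] i0)) :=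
          ih.1.trans ih.2.symm
        have hp := prop _ hsame
        rw [Function.iterate_succ_apply']
        exact ⟨hp.1.trans ih.1, hp.2.trans ih.1⟩
    have iter_val : ∀ d : ℕ, (((finSucc hn)^[d] i0 : Fin n) : ℕ) = ((i0 : ℕ) + d) % n := by
      intro d
      induction d with
      | zero => simp [Nat.mod_eq_of_lt i0.isLt]
      | succ d ih =>
        rw [Function.iterate_succ_apply']
        show ((((finSucc hn)^[d] i0 : Fin n) : ℕ) + 1) % n = ((i0 : ℕ) + (d + 1)) % n
        rw [ih, Nat.mod_add_mod, ← Nat.add_assoc]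
    have reach : ∀ j : Fin n, ∃ d : ℕ, (finSucc hn)^[d] i0 = j := by
      intro j
      refine ⟨n - (i0 : ℕ) + (j : ℕ), ?_⟩
      apply Fin.ext
      rw [iter_val]
      have h1 : (i0 : ℕ) + (n - (i0 : ℕ) + (j : ℕ)) = n + (j : ℕ) := by
        have := i0.isLt; omega
      rw [h1, Nat.add_mod_left, Nat.mod_eq_of_lt j.isLt]
    have allconst : ∀ v : Fin n ⊕ Fin n, φ v = φ (Sum.inl i0) := by
      intro v
      rcases v with j | j
      · obtain ⟨d, hd⟩ := reach j
        rw [← hd]; exact (iter d).1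
      · obtain ⟨d, hd⟩ := reach j
        rw [← hd]; exact (iter d).2
    rcases hφ.1 with hcard | ⟨x, y, hxy'⟩
    · rw [Fintype.card_sum, Fintype.card_fin] at hcard
      omega
    · exact hxy' ((allconst x).trans (allconst y).symm)
  intro a b hab
  by_contra hne
  exact collapse a b hne hab

end Aux

/-- For `n ≥ 3`, the 2-edge-coloured graph `Hₙ` on vertices
`{x₀,…,x_{n−1}} ∪ {y₀,…,y_{n−1}}` (here `Fin n ⊕ Fin n`), built from `K_{n,n}`
by adding the cycle edges `xᵢx_{i+1}` and `yᵢy_{i+1}` (indices mod `n`), where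
the cycle edges and the edges `xⱼyⱼ` get colour 1 (here `0 : Fin 2`) and all
other edges colour 2 (here `1 : Fin 2`), is a 2-edge-coloured simple clique:
`χₛ(Hₙ) = 2n`. -/
theorem stmt13 (n : ℕ) (hn : 3 ≤ n) (H : MixedGraph 0 2 (Fin n ⊕ Fin n))
    (hxx : ∀ i j : Fin n, H.edgeColor (Sum.inl i) (Sum.inl j) =
      if ((i : ℕ) + 1) % n = (j : ℕ) ∨ ((j : ℕ) + 1) % n = (i : ℕ)
      then some 0 else none)
    (hyy : ∀ i j : Fin n, H.edgeColor (Sum.inr i) (Sum.inr j) =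
      if ((i : ℕ) + 1) % n = (j : ℕ) ∨ ((j : ℕ) + 1) % n = (i : ℕ)
      then some 0 else none)
    (hxy : ∀ i j : Fin n, H.edgeColor (Sum.inl i) (Sum.inr j) =
      some (if i = j then 0 else 1)) :
    H.simpleChrom = 2 * n := by
  have e : (Fin n ⊕ Fin n) ≃ Fin (2 * n) :=
    finSumFinEquiv.trans (finCongr (by ring))
  -- upper bound witness: transport `H` along `e`
  have mem2n : (2 * n) ∈ {t : ℕ | ∃ H' : MixedGraph 0 2 (Fin t),
      ∃ φ : Fin n ⊕ Fin n → Fin t, H.IsSimpleHom H' φ} := by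
    refine ⟨{ arcColor := fun _ _ => none
              edgeColor := fun a b => H.edgeColor (e.symm a) (e.symm b)
              edge_symm := fun a b => H.edge_symm _ _
              edge_irrefl := fun a => H.edge_irrefl _
              arc_asymm := by intro u v h; simp at h
              arc_not_edge := by intro u v h; simp at h }, e, ?_, ?_, ?_⟩
    · refine Or.inr ⟨Sum.inl ⟨0, by omega⟩, Sum.inr ⟨0, by omega⟩, fun h => ?_⟩
      have := e.injective h
      simp at this
    · intro u v j
      exact absurd j.isLt (by omega)
    · intro u v i h
      right
      simpa using h
  apply le_antisymm
  · exact Nat.sInf_le mem2n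
  · apply le_csInf ⟨2 * n, mem2n⟩
    rintro t ⟨H', φ, hφ⟩
    have hinj := stmt13_inj n hn H hxx hyy hxy H' φ hφ
    have := Fintype.card_le_of_injective φ hinj
    simpa [Fintype.card_sum, two_mul] using this
end

section
/- For every pair of nonnegative integers (m,n) with m + n ≥ 1 and (m,n) ≠ (0,1), and for every integer k ≥ 5, there exists an (m,n)-mixed simple clique on k vertices, i.e. an (m,n)-mixed graph G with |V(G)| = k and χ_s(G) = k. -/
section Aux

open MixedGraph

/-- Propagation: a property holding on two consecutive naturals below `k`,
closed under up-steps and down-steps, holds everywhere below `k`. -/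
lemma prop_all {k : ℕ} (P : ℕ → Prop)
    (up : ∀ i, i + 2 < k → P i → P (i + 1) → P (i + 2))
    (down : ∀ i, i + 1 < k → P i → P (i + 1) → P (i - 1))
    {i : ℕ} (hik : i + 1 < k) (h0 : P i) (h1 : P (i + 1)) :
    ∀ j, j < k → P j := by
  have hup : ∀ d, i + d < k → P (i + d) := by
    intro d
    induction d using Nat.strong_induction_on with
    | _ d ih =>
      match d with
      | 0 => intro _; exact h0
      | 1 => intro _; exact h1
      | (e + 2) =>
        intro hlt
        exact up (i + e) hlt (ih e (by omega) (by omega)) (ih (e + 1) (by omega) (by omega))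
  have hdown : ∀ d, d ≤ i → P (i - d) := by
    intro d
    induction d using Nat.strong_induction_on with
    | _ d ih =>
      match d with
      | 0 => intro _; exact h0
      | 1 => intro _; exact down i hik h0 h1
      | (e + 2) =>
        intro hde
        have hp1 : P (i - (e + 1)) := ih (e + 1) (by omega) (by omega)
        have hp2 : P (i - (e + 1) + 1) := by
          have heq : i - (e + 1) + 1 = i - e := by omega
          rw [heq]
          exact ih e (by omega) (by omega)
        have heq : i - (e + 2) = i - (e + 1) - 1 := by omega
        rw [heq]
        exact down (i - (e + 1)) (by omega) hp1 hp2
  intro j hj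
  rcases le_or_gt j i with h | h
  · have heq : j = i - (i - j) := by omega
    rw [heq]
    exact hdown (i - j) (by omega)
  · have heq : j = i + (j - i) := by omega
    rw [heq]
    exact hup (j - i) (by omega)

end Aux
/-- Forcing via arcs: if `u → v → w` in `G` and `φ u = φ w`, then `φ v = φ u`. -/
lemma arc_force {m n t : ℕ} {V : Type} (G : MixedGraph m n V)
    (H : MixedGraph m n (Fin t)) (φ : V → Fin t)
    (harc : ∀ u v : V, ∀ j : Fin m, G.arcColor u v = some j →
      φ u = φ v ∨ H.arcColor (φ u) (φ v) = some j)
    {u v w : V} {j j' : Fin m}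
    (h1 : G.arcColor u v = some j) (h2 : G.arcColor v w = some j')
    (huw : φ u = φ w) : φ v = φ u := by
  rcases harc u v j h1 with h | h
  · exact h.symm
  rcases harc v w j' h2 with h' | h'
  · rw [h', ← huw]
  exfalso
  have hs : (H.arcColor (φ u) (φ v)).isSome := by simp [h]
  have hnone := H.arc_asymm _ _ hs
  rw [← huw] at h'
  rw [hnone] at h'
  exact absurd h' (by simp)

/-- Forcing via edges of different colours. -/
lemma edge_force {m n t : ℕ} {V : Type} (G : MixedGraph m n V)
    (H : MixedGraph m n (Fin t)) (φ : V → Fin t)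
    (hedge : ∀ u v : V, ∀ i : Fin n, G.edgeColor u v = some i →
      φ u = φ v ∨ H.edgeColor (φ u) (φ v) = some i)
    {u v w : V} {c c' : Fin n}
    (h1 : G.edgeColor u v = some c) (h2 : G.edgeColor w v = some c')
    (hcc : c ≠ c') (huw : φ u = φ w) : φ v = φ u := by
  rcases hedge u v c h1 with h | h
  · exact h.symm
  rcases hedge w v c' h2 with h' | h'
  · exact h'.symm.trans huw.symm
  rw [← huw] at h'
  exact absurd (Option.some.inj (h.symm.trans h')) hcc

/-- The path-based tournament: `u → v` iff `v = u + 1` or `v + 2 ≤ u`. -/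
def arcG (m n k : ℕ) (hm : 0 < m) : MixedGraph m n (Fin k) where
  arcColor u v := if v.val = u.val + 1 ∨ v.val + 2 ≤ u.val then some ⟨0, hm⟩ else none
  edgeColor _ _ := none
  edge_symm _ _ := rfl
  edge_irrefl _ := rfl
  arc_asymm := by
    intro u v h
    by_cases hc : v.val = u.val + 1 ∨ v.val + 2 ≤ u.val
    · rw [if_neg (by omega)]
    · simp only [if_neg hc, Option.isSome_none] at h
      exact absurd h (by simp)
  arc_not_edge _ _ _ := rfl

/-- The path-based 2-edge-coloured complete graph. -/
def edgeG (m n k : ℕ) (hn : 1 < n) : MixedGraph m n (Fin k) where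
  arcColor _ _ := none
  edgeColor u v := if u = v then none
    else if u.val + 1 = v.val ∨ v.val + 1 = u.val then some ⟨1, hn⟩
    else some ⟨0, by omega⟩
  edge_symm := by
    intro u v
    by_cases h : u = v
    · subst h; rfl
    · rw [if_neg h, if_neg (Ne.symm h)]
      by_cases h2 : u.val + 1 = v.val ∨ v.val + 1 = u.val
      · rw [if_pos h2, if_pos (Or.symm h2)]
      · rw [if_neg h2, if_neg (fun hh => h2 (Or.symm hh))]
  edge_irrefl v := if_pos rfl
  arc_asymm := by intro u v h; simp at h
  arc_not_edge := by intro u v h; simp at h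
lemma arc_closure {m n k t : ℕ} (hm : 0 < m) (hk : 5 ≤ k)
    (H : MixedGraph m n (Fin t)) (φ : Fin k → Fin t)
    (harc : ∀ u v : Fin k, ∀ j : Fin m, (arcG m n k hm).arcColor u v = some j →
      φ u = φ v ∨ H.arcColor (φ u) (φ v) = some j)
    {a b : Fin k} (hab : a ≠ b) (hfab : φ a = φ b) :
    ∀ x : Fin k, φ x = φ a := by
  have arcdef : ∀ u v : Fin k, (v.val = u.val + 1 ∨ v.val + 2 ≤ u.val) →
      (arcG m n k hm).arcColor u v = some ⟨0, hm⟩ := by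
    intro u v h
    exact if_pos h
  have force : ∀ x y z : ℕ, ∀ hx : x < k, ∀ hy : y < k, ∀ hz : z < k,
      (y = x + 1 ∨ y + 2 ≤ x) → (z = y + 1 ∨ z + 2 ≤ y) →
      φ ⟨x, hx⟩ = φ ⟨z, hz⟩ → φ ⟨y, hy⟩ = φ ⟨x, hx⟩ := by
    intro x y z hx hy hz h1 h2 h3
    exact arc_force _ H φ harc (arcdef ⟨x, hx⟩ ⟨y, hy⟩ h1) (arcdef ⟨y, hy⟩ ⟨z, hz⟩ h2) h3
  -- main work: from one collapsed pair, collapse everything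
  suffices haux : ∀ u w : Fin k, u.val < w.val → φ u = φ w → ∀ x : Fin k, φ x = φ u by
    rcases lt_trichotomy a.val b.val with h | h | h
    · exact haux a b h hfab
    · exact absurd (Fin.ext h) hab
    · intro x
      rw [hfab]
      exact haux b a h hfab.symm x
  intro u w huw hphi
  set P : ℕ → Prop := fun i => ∀ h : i < k, φ ⟨i, h⟩ = φ u with hP
  have hPu : P u.val := fun h => congrArg φ (Fin.ext rfl)
  have hPw : P w.val := fun h => (congrArg φ (Fin.ext rfl)).trans hphi.symm
  have up : ∀ i, i + 2 < k → P i → P (i + 1) → P (i + 2) := by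
    intro i hlt hi hi1 h2
    have := force (i + 1) (i + 2) i (by omega) h2 (by omega) (by omega) (by omega)
      (by rw [hi1 (by omega), hi (by omega)])
    rw [this, hi1 (by omega)]
  have down : ∀ i, i + 1 < k → P i → P (i + 1) → P (i - 1) := by
    intro i hlt hi hi1 hl
    rcases Nat.eq_zero_or_pos i with rfl | hpos
    · exact hi hl
    have := force (i + 1) (i - 1) i hlt hl (by omega) (by omega) (by omega)
      (by rw [hi1 hlt, hi (by omega)])
    rw [this, hi1 hlt]
  have main : ∃ i, i + 1 < k ∧ P i ∧ P (i + 1) := by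
    rcases Nat.lt_or_ge (u.val + 1) w.val with hgap | hcons
    swap
    · -- w = u + 1 : consecutive already
      have : w.val = u.val + 1 := by omega
      exact ⟨u.val, by omega, hPu, by rw [← this]; exact hPw⟩
    rcases Nat.lt_or_ge (w.val + 1) k with hwlt | hwtop
    · -- extend past w
      have hp : P (w.val + 1) := by
        intro h
        have := force w.val (w.val + 1) u.val w.isLt h u.isLt (by omega) (by omega)
          (by rw [hPw w.isLt, hPu u.isLt])
        rw [this, hPw w.isLt]
      exact ⟨w.val, by omega, hPw, hp⟩
    rcases Nat.eq_zero_or_pos u.val with hu0 | hupos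
    · -- u = 0, w = k - 1 : force 2, then 3
      have hp2 : P 2 := by
        intro h
        have := force w.val 2 u.val w.isLt h u.isLt (by omega) (by omega)
          (by rw [hPw w.isLt, hPu u.isLt])
        rw [this, hPw w.isLt]
      have hp3 : P 3 := by
        intro h
        have := force 2 3 u.val (by omega) h u.isLt (by omega) (by omega)
          (by rw [hp2 (by omega), hPu u.isLt])
        rw [this, hp2 (by omega)]
      exact ⟨2, by omega, hp2, hp3⟩
    · -- w = k - 1, u ≥ 1 : force u - 1
      have hp : P (u.val - 1) := by
        intro h
        have := force w.val (u.val - 1) u.val w.isLt h u.isLt (by omega) (by omega)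
          (by rw [hPw w.isLt, hPu u.isLt])
        rw [this, hPw w.isLt]
      refine ⟨u.val - 1, by omega, hp, ?_⟩
      have : u.val - 1 + 1 = u.val := by omega
      rw [this]; exact hPu
  obtain ⟨i, hik, h0, h1⟩ := main
  have hall := prop_all P up down hik h0 h1
  intro x
  have := hall x.val x.isLt x.isLt
  rwa [Fin.eta] at this
lemma edge_closure {m n k t : ℕ} (hn : 1 < n) (hk : 5 ≤ k)
    (H : MixedGraph m n (Fin t)) (φ : Fin k → Fin t)
    (hedge : ∀ u v : Fin k, ∀ i : Fin n, (edgeG m n k hn).edgeColor u v = some i →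
      φ u = φ v ∨ H.edgeColor (φ u) (φ v) = some i)
    {a b : Fin k} (hab : a ≠ b) (hfab : φ a = φ b) :
    ∀ x : Fin k, φ x = φ a := by
  have edef1 : ∀ u v : Fin k, (u.val + 1 = v.val ∨ v.val + 1 = u.val) →
      (edgeG m n k hn).edgeColor u v = some ⟨1, hn⟩ := by
    intro u v h
    have hne : u ≠ v := by intro he; subst he; omega
    show (edgeG m n k hn).edgeColor u v = _
    unfold edgeG
    dsimp only
    rw [if_neg hne, if_pos h]
  have edef0 : ∀ u v : Fin k, u ≠ v → ¬(u.val + 1 = v.val ∨ v.val + 1 = u.val) →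
      (edgeG m n k hn).edgeColor u v = some ⟨0, by omega⟩ := by
    intro u v hne h
    show (edgeG m n k hn).edgeColor u v = _
    unfold edgeG
    dsimp only
    rw [if_neg hne, if_neg h]
  have hcc : (⟨1, hn⟩ : Fin n) ≠ ⟨0, by omega⟩ := by
    intro h
    exact absurd (congrArg Fin.val h) (by simp)
  -- force x y z : x–y is a path edge, z–y is a non-path edge, φ x = φ z ⟹ φ y = φ x
  have force : ∀ x y z : ℕ, ∀ hx : x < k, ∀ hy : y < k, ∀ hz : z < k,
      (x + 1 = y ∨ y + 1 = x) → z ≠ y → ¬(z + 1 = y ∨ y + 1 = z) →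
      φ ⟨x, hx⟩ = φ ⟨z, hz⟩ → φ ⟨y, hy⟩ = φ ⟨x, hx⟩ := by
    intro x y z hx hy hz h1 h2 h3 h4
    exact edge_force _ H φ hedge (edef1 ⟨x, hx⟩ ⟨y, hy⟩ h1)
      (edef0 ⟨z, hz⟩ ⟨y, hy⟩ (fun he => h2 (congrArg Fin.val he)) h3) hcc h4
  suffices haux : ∀ u w : Fin k, u.val < w.val → φ u = φ w → ∀ x : Fin k, φ x = φ u by
    rcases lt_trichotomy a.val b.val with h | h | h
    · exact haux a b h hfab
    · exact absurd (Fin.ext h) hab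
    · intro x
      rw [hfab]
      exact haux b a h hfab.symm x
  intro u w huw hphi
  set P : ℕ → Prop := fun i => ∀ h : i < k, φ ⟨i, h⟩ = φ u with hP
  have hPu : P u.val := fun h => congrArg φ (Fin.ext rfl)
  have hPw : P w.val := fun h => (congrArg φ (Fin.ext rfl)).trans hphi.symm
  have up : ∀ i, i + 2 < k → P i → P (i + 1) → P (i + 2) := by
    intro i hlt hi hi1 h2
    have := force (i + 1) (i + 2) i (by omega) h2 (by omega) (by omega) (by omega) (by omega)
      (by rw [hi1 (by omega), hi (by omega)])
    rw [this, hi1 (by omega)]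
  have down : ∀ i, i + 1 < k → P i → P (i + 1) → P (i - 1) := by
    intro i hlt hi hi1 hl
    rcases Nat.eq_zero_or_pos i with rfl | hpos
    · exact hi hl
    have := force i (i - 1) (i + 1) (by omega) hl hlt (by omega) (by omega) (by omega)
      (by rw [hi (by omega), hi1 hlt])
    rw [this, hi (by omega)]
  have main : ∃ i, i + 1 < k ∧ P i ∧ P (i + 1) := by
    rcases Nat.lt_or_ge (u.val + 1) w.val with hgap | hcons
    swap
    · have : w.val = u.val + 1 := by omega
      exact ⟨u.val, by omega, hPu, by rw [← this]; exact hPw⟩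
    rcases Nat.lt_or_ge (u.val + 2) w.val with hgap3 | hw2
    · -- w ≥ u + 3 : take v = u + 1
      have hp : P (u.val + 1) := by
        intro h
        have := force u.val (u.val + 1) w.val u.isLt h w.isLt (by omega) (by omega) (by omega)
          (by rw [hPu u.isLt, hPw w.isLt])
        rw [this, hPu u.isLt]
      exact ⟨u.val, by omega, hPu, hp⟩
    -- w = u + 2
    have hw2' : w.val = u.val + 2 := by omega
    rcases Nat.lt_or_ge (u.val + 3) k with hlt | hge
    · -- v = u + 3, consecutive pair (u+2, u+3)
      have hp : P (u.val + 3) := by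
        intro h
        have := force w.val (u.val + 3) u.val w.isLt h u.isLt (by omega) (by omega) (by omega)
          (by rw [hPw w.isLt, hPu u.isLt])
        rw [this, hPw w.isLt]
      refine ⟨u.val + 2, by omega, by rw [← hw2']; exact hPw, ?_⟩
      exact hp
    · -- u + 3 ≥ k, so u ≥ 2 : v = u - 1, consecutive pair (u-1, u)
      have hupos : 2 ≤ u.val := by omega
      have hp : P (u.val - 1) := by
        intro h
        have := force u.val (u.val - 1) w.val u.isLt h w.isLt (by omega) (by omega) (by omega)
          (by rw [hPu u.isLt, hPw w.isLt])
        rw [this, hPu u.isLt]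
      refine ⟨u.val - 1, by omega, hp, ?_⟩
      have : u.val - 1 + 1 = u.val := by omega
      rw [this]; exact hPu
  obtain ⟨i, hik, h0, h1⟩ := main
  have hall := prop_all P up down hik h0 h1
  intro x
  have := hall x.val x.isLt x.isLt
  rwa [Fin.eta] at this
lemma chrom_eq {m n k : ℕ} (hk : 5 ≤ k) (G : MixedGraph m n (Fin k))
    (hclos : ∀ t : ℕ, ∀ H : MixedGraph m n (Fin t), ∀ φ : Fin k → Fin t,
      (∀ u v : Fin k, ∀ j : Fin m, G.arcColor u v = some j →
        φ u = φ v ∨ H.arcColor (φ u) (φ v) = some j) →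
      (∀ u v : Fin k, ∀ i : Fin n, G.edgeColor u v = some i →
        φ u = φ v ∨ H.edgeColor (φ u) (φ v) = some i) →
      ∀ a b : Fin k, a ≠ b → φ a = φ b → ∀ x : Fin k, φ x = φ a) :
    G.simpleChrom = k := by
  have hmem : k ∈ {t : ℕ | ∃ H : MixedGraph m n (Fin t), ∃ φ : Fin k → Fin t,
      G.IsSimpleHom H φ} := by
    refine ⟨G, id, ?_, fun u v j h => Or.inr h, fun u v i h => Or.inr h⟩
    refine Or.inr ⟨⟨0, by omega⟩, ⟨1, by omega⟩, ?_⟩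
    intro h
    have := congrArg Fin.val h
    simp at this
  have hlb : ∀ t ∈ {t : ℕ | ∃ H : MixedGraph m n (Fin t), ∃ φ : Fin k → Fin t,
      G.IsSimpleHom H φ}, k ≤ t := by
    rintro t ⟨H, φ, hnc, harc, hedge⟩
    have hinj : Function.Injective φ := by
      intro a b hab
      by_contra hne'
      have hall := hclos t H φ harc hedge a b hne' hab
      rcases hnc with h1 | ⟨x, y, hxy⟩
      · rw [Fintype.card_fin] at h1; omega
      · exact hxy ((hall x).trans (hall y).symm)
    have := Fintype.card_le_of_injective φ hinj
    simpa using this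
  exact le_antisymm (Nat.sInf_le hmem) (le_csInf ⟨k, hmem⟩ hlb)

/-- For every pair `(m,n)` with `m + n ≥ 1` and
`(m,n) ≠ (0,1)`, and every `k ≥ 5`, there is an `(m,n)`-mixed simple clique on
`k` vertices. -/
theorem stmt15 (m n k : ℕ) (hmn : 1 ≤ m + n) (hne : (m, n) ≠ (0, 1))
    (hk : 5 ≤ k) :
    ∃ G : MixedGraph m n (Fin k), G.simpleChrom = k := by
  rcases Nat.eq_zero_or_pos m with hm0 | hm
  · subst hm0
    have hn1 : n ≠ 1 := fun h => hne (by rw [h])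
    have hn : 1 < n := by omega
    refine ⟨edgeG 0 n k hn, chrom_eq hk _ ?_⟩
    intro t H φ harc hedge a b hab hfab
    exact edge_closure hn hk H φ hedge hab hfab
  · refine ⟨arcG m n k hm, chrom_eq hk _ ?_⟩
    intro t H φ harc hedge a b hab hfab
    exact arc_closure hm hk H φ harc hab hfab
end

section
/- If G is an oriented graph whose underlying graph is a 2-tree, then χ_s(G) ≤ 3; indeed, G admits a simple homomorphism to the directed cycle on three vertices. -/
/-- `G` is a `k`-tree: it can be built from `K_{k+1}` by repeatedly adding a
new vertex joined to exactly the vertices of an existing `k`-clique; encoded by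
a construction ordering of the vertices. -/
def IsKTree (k : ℕ) {V : Type} [Fintype V] (G : SimpleGraph V) : Prop :=
  k + 1 ≤ Fintype.card V ∧
  ∃ e : Fin (Fintype.card V) ≃ V,
    (∀ i j : Fin (Fintype.card V), (i : ℕ) < k + 1 → (j : ℕ) < k + 1 → i ≠ j →
        G.Adj (e i) (e j)) ∧
    (∀ j : Fin (Fintype.card V), k + 1 ≤ (j : ℕ) →
      ∃ S : Finset (Fin (Fintype.card V)), S.card = k ∧ (∀ a ∈ S, a < j) ∧
        (∀ a ∈ S, ∀ b ∈ S, a ≠ b → G.Adj (e a) (e b)) ∧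
        (∀ i : Fin (Fintype.card V), i < j → (G.Adj (e i) (e j) ↔ i ∈ S)))


namespace St18

def Pc {V : Type} (G : MixedGraph 1 0 V) (v a : V) (x c : Fin 3) : Prop :=
  ((G.arcColor a v).isSome → c = x ∨ c = x + 1) ∧
  ((G.arcColor v a).isSome → c = x ∨ c = x + 2)

def dshift {V : Type} (G : MixedGraph 1 0 V) (a v : V) : Fin 3 :=
  if (G.arcColor a v).isSome then 1 else 2

lemma mem_Pc {V : Type} (G : MixedGraph 1 0 V) (v a : V) (x c : Fin 3)
    (h : c = x ∨ c = x + dshift G a v) : Pc G v a x c := by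
  rcases h with h | h
  · exact ⟨fun _ => Or.inl h, fun _ => Or.inl h⟩
  · unfold dshift at h
    by_cases hav : (G.arcColor a v).isSome
    · simp only [hav, if_true] at h
      refine ⟨fun _ => Or.inr h, fun hva => ?_⟩
      rw [G.arc_asymm a v hav] at hva; simp at hva
    · simp only [hav, if_false] at h
      exact ⟨fun h' => absurd h' hav, fun _ => Or.inr h⟩

lemma dshift_ne_zero {V : Type} (G : MixedGraph 1 0 V) (a v : V) :
    dshift G a v ≠ 0 := by
  unfold dshift; split <;> decide

lemma existsBoth {V : Type} (G : MixedGraph 1 0 V) (v a b : V) (x y : Fin 3) :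
    ∃ c, Pc G v a x c ∧ Pc G v b y c := by
  have key : ∀ (x y d1 d2 : Fin 3), (d1 = 1 ∨ d1 = 2) → (d2 = 1 ∨ d2 = 2) →
      ∃ c, (c = x ∨ c = x + d1) ∧ (c = y ∨ c = y + d2) := by decide
  have h1 : dshift G a v = 1 ∨ dshift G a v = 2 := by unfold dshift; split <;> simp
  have h2 : dshift G b v = 1 ∨ dshift G b v = 2 := by unfold dshift; split <;> simp
  obtain ⟨c, hc1, hc2⟩ := key x y _ _ h1 h2
  exact ⟨c, mem_Pc G v a x c hc1, mem_Pc G v b y c hc2⟩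

noncomputable def bphi {V : Type} (G : MixedGraph 1 0 V) (ev : ℕ → V)
    (pick : ℕ → ℕ × ℕ) : ℕ → Fin 3
  | 0 => 0
  | 1 => dshift G (ev 0) (ev 1)
  | (j+2) =>
    Classical.choose (existsBoth G (ev (j+2)) (ev (min (pick (j+2)).1 (j+1)))
      (ev (min (pick (j+2)).2 (j+1)))
      (bphi G ev pick (min (pick (j+2)).1 (j+1)))
      (bphi G ev pick (min (pick (j+2)).2 (j+1))))
  termination_by j => j
  decreasing_by
  · exact Nat.lt_succ_of_le (Nat.min_le_right _ _)
  · exact Nat.lt_succ_of_le (Nat.min_le_right _ _)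

end St18

/-- If `G` is an oriented graph (a `(1,0)`-mixed graph) whose
underlying graph is a 2-tree, then `χₛ(G) ≤ 3`; indeed `G` admits a simple
homomorphism to the directed cycle on three vertices. -/
theorem stmt18 {V : Type} [Fintype V] (G : MixedGraph 1 0 V)
    (h2tree : IsKTree 2 G.underlying)
    (H : MixedGraph 1 0 (Fin 3))
    (hH : ∀ u v : Fin 3, H.arcColor u v =
      if ((u : ℕ) + 1) % 3 = (v : ℕ) then some 0 else none) :
    G.simpleChrom ≤ 3 ∧ ∃ φ : V → Fin 3, G.IsSimpleHom H φ := by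
  classical
  set N := Fintype.card V with hN
  obtain ⟨hcard, e, hbase, hstep⟩ := h2tree
  have hN3 : 3 ≤ N := hcard
  have hNpos : 0 < N := by omega
  -- totalized vertex enumeration
  set ev : ℕ → V := fun i => e ⟨i % N, Nat.mod_lt _ hNpos⟩ with hev_def
  have hev : ∀ i (hi : i < N), ev i = e ⟨i, hi⟩ := by
    intro i hi
    simp only [hev_def]
    congr 1
    exact Fin.ext (Nat.mod_eq_of_lt hi)
  -- choose the picks
  have hpick_ex : ∀ j : ℕ, ∃ p : ℕ × ℕ, 2 ≤ j → j < N →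
      p.1 < j ∧ p.2 < j ∧
      (∀ i, i < j → G.Adj (ev i) (ev j) → i = p.1 ∨ i = p.2) := by
    intro j
    by_cases hj2 : 2 ≤ j ∧ j < N
    · obtain ⟨hj2, hjN⟩ := hj2
      by_cases hj3 : j = 2
      · subst hj3
        exact ⟨(0, 1), fun _ _ => ⟨by omega, by omega, fun i hi _ => by omega⟩⟩
      · have hj3' : 3 ≤ j := by omega
        obtain ⟨S, hScard, hSlt, _, hSadj⟩ := hstep ⟨j, hjN⟩ hj3'
        obtain ⟨a, b, hab, hSab⟩ := Finset.card_eq_two.mp hScard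
        refine ⟨(a.val, b.val), fun _ _ => ⟨?_, ?_, ?_⟩⟩
        · exact hSlt a (by simp [hSab])
        · exact hSlt b (by simp [hSab])
        · intro i hi hadj
          have hiN : i < N := lt_trans hi hjN
          have hilt : (⟨i, hiN⟩ : Fin N) < ⟨j, hjN⟩ := hi
          have := (hSadj ⟨i, hiN⟩ hilt).mp ?_
          · rw [hSab] at this
            simp only [Finset.mem_insert, Finset.mem_singleton] at this
            rcases this with h | h
            · exact Or.inl (by rw [← h])
            · exact Or.inr (by rw [← h])
          · rw [← hev i hiN, ← hev j hjN]
            exact hadj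
    · exact ⟨(0, 0), fun h1 h2 => absurd ⟨h1, h2⟩ hj2⟩
  choose pick hpick using hpick_ex
  set g : ℕ → Fin 3 := St18.bphi G ev pick with hg_def
  -- key invariant
  have hinv : ∀ j, j < N → ∀ i, i < j → G.Adj (ev i) (ev j) →
      St18.Pc G (ev j) (ev i) (g i) (g j) := by
    intro j hjN i hij hadj
    match j with
    | 0 => omega
    | 1 =>
      have hi0 : i = 0 := by omega
      subst hi0
      have hg0 : g 0 = 0 := by rw [hg_def, St18.bphi]
      have hg1 : g 1 = St18.dshift G (ev 0) (ev 1) := by rw [hg_def, St18.bphi]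
      apply St18.mem_Pc
      rw [hg0, hg1, zero_add]
      exact Or.inr rfl
    | (jj+2) =>
      obtain ⟨hp1, hp2, hpcov⟩ := hpick (jj+2) (by omega) hjN
      have hmin1 : min (pick (jj+2)).1 (jj+1) = (pick (jj+2)).1 :=
        Nat.min_eq_left (by omega)
      have hmin2 : min (pick (jj+2)).2 (jj+1) = (pick (jj+2)).2 :=
        Nat.min_eq_left (by omega)
      have hgj : g (jj+2) = Classical.choose
          (St18.existsBoth G (ev (jj+2)) (ev (min (pick (jj+2)).1 (jj+1)))
            (ev (min (pick (jj+2)).2 (jj+1)))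
            (g (min (pick (jj+2)).1 (jj+1)))
            (g (min (pick (jj+2)).2 (jj+1)))) := by
        rw [hg_def, St18.bphi]
      have hspec := Classical.choose_spec
          (St18.existsBoth G (ev (jj+2)) (ev (min (pick (jj+2)).1 (jj+1)))
            (ev (min (pick (jj+2)).2 (jj+1)))
            (g (min (pick (jj+2)).1 (jj+1)))
            (g (min (pick (jj+2)).2 (jj+1))))
      rw [← hgj] at hspec
      rw [hmin1, hmin2] at hspec
      rcases hpcov i hij hadj with h | h
      · rw [h]; exact hspec.1
      · rw [h]; exact hspec.2
  -- the homomorphism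
  set φ : V → Fin 3 := fun v => g ((e.symm v).val) with hφ_def
  have hφev : ∀ i (hi : i < N), φ (ev i) = g i := by
    intro i hi
    simp only [hφ_def]
    rw [hev i hi]
    simp
  have harith : ∀ x : Fin 3, ((x : ℕ) + 1) % 3 = ((x + 1 : Fin 3) : ℕ) := by decide
  have harith2 : ∀ x y : Fin 3, x = y + 2 → y = x + 1 := by decide
  have hHarc : ∀ x : Fin 3, H.arcColor x (x + 1) = some 0 := by
    intro x
    rw [hH, if_pos (harith x)]
  have hhom : G.IsSimpleHom H φ := by
    refine ⟨?_, ?_, ?_⟩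
    · -- non-constant
      refine Or.inr ⟨ev 1, ev 0, ?_⟩
      rw [hφev 1 (by omega), hφev 0 (by omega)]
      have hg0 : g 0 = 0 := by rw [hg_def, St18.bphi]
      have hg1 : g 1 = St18.dshift G (ev 0) (ev 1) := by rw [hg_def, St18.bphi]
      rw [hg0, hg1]
      exact St18.dshift_ne_zero G (ev 0) (ev 1)
    · intro u v jcol harc
      have hjcol : jcol = 0 := Subsingleton.elim _ _
      subst hjcol
      have hsome : (G.arcColor u v).isSome := by rw [harc]; rfl
      have hne : u ≠ v := by
        intro h; subst h
        rw [G.arc_asymm u u hsome] at harc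
        cases harc
      set iu : ℕ := (e.symm u).val with hiu
      set iv : ℕ := (e.symm v).val with hiv
      have hiuN : iu < N := (e.symm u).isLt
      have hivN : iv < N := (e.symm v).isLt
      have hevu : ev iu = u := by
        rw [hev iu hiuN]
        simp only [hiu, Fin.eta, Equiv.apply_symm_apply]
      have hevv : ev iv = v := by
        rw [hev iv hivN]
        simp only [hiv, Fin.eta, Equiv.apply_symm_apply]
      have hφu : φ u = g iu := rfl
      have hφv : φ v = g iv := rfl
      have hne' : iu ≠ iv := by
        intro h
        apply hne
        rw [← hevu, ← hevv, h]
      rcases lt_or_gt_of_ne hne' with hlt | hlt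
      · -- iu < iv : u earlier
        have hadj : G.Adj (ev iu) (ev iv) := by
          rw [hevu, hevv]; exact Or.inl hsome
        have hP := hinv iv hivN iu hlt hadj
        rw [hevu, hevv] at hP
        rcases hP.1 hsome with h | h
        · exact Or.inl (by rw [hφu, hφv, h])
        · refine Or.inr ?_
          rw [hφu, hφv, h]
          exact hHarc _
      · -- iv < iu : v earlier
        have hadj : G.Adj (ev iv) (ev iu) := by
          rw [hevu, hevv]; exact Or.inr (Or.inl hsome)
        have hP := hinv iu hiuN iv hlt hadj
        rw [hevu, hevv] at hP
        rcases hP.2 hsome with h | h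
        · exact Or.inl (by rw [hφu, hφv, h])
        · refine Or.inr ?_
          rw [hφu, hφv, harith2 _ _ h]
          exact hHarc _
    · intro u v i
      exact i.elim0
  exact ⟨Nat.sInf_le ⟨H, φ, hhom⟩, φ, hhom⟩
end
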